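/- arXiv:2211.15122 — 13 statements merged into one kernel-verified Lean document; each statement's English description precedes it below -/
import Mathlib

section
/- The mechanism that allocates the good to a fixed agent i* ∈ argmax_i t̲_i with probability one in every scenario and never inspects (p_{i*} ≡ 1, q_i ≡ 0, p_i ≡ 0 for i ≠ i*) is feasible, incentive compatible, and achieves worst-case payoff max_i t̲_i; hence the optimal value of the robust mechanism design problem under the support-only ambiguity set equals max_i t̲_i. -/
/-- The type space: every coordinate lies in `[tlo i, thi i]`. -/
def InT {ι : Type*} (tlo thi : ι → ℝ) (t : ι → ℝ) : Prop :=
  ∀ i, t i ∈ Set.Icc (tlo i) (thi i)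

/-- Feasibility: values in `[0,1]`, `q ≤ p`, and total allocation at most one, on the type space. -/
def Feas {ι : Type*} [Fintype ι] (tlo thi : ι → ℝ) (p q : (ι → ℝ) → ι → ℝ) : Prop :=
  ∀ t, InT tlo thi t →
    (∀ i, 0 ≤ q t i ∧ q t i ≤ p t i ∧ p t i ≤ 1) ∧ ∑ i, p t i ≤ 1

/-- Incentive compatibility: no agent gains by misreporting his type. -/
def IC {ι : Type*} [DecidableEq ι] (tlo thi : ι → ℝ) (p q : (ι → ℝ) → ι → ℝ) : Prop :=
  ∀ i, ∀ t, InT tlo thi t → ∀ s ∈ Set.Icc (tlo i) (thi i),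
    p (Function.update t i s) i - q (Function.update t i s) i ≤ p t i

/-- The principal's payoff in scenario `t`. -/
def Pay {ι : Type*} [Fintype ι] (c : ι → ℝ) (p q : (ι → ℝ) → ι → ℝ) (t : ι → ℝ) : ℝ :=
  ∑ i, (p t i * t i - q t i * c i)

/-- The mechanism that always allocates the good to a fixed agent
`i* ∈ argmax_i t̲_i` without inspection is feasible and incentive compatible, its
worst-case payoff equals `max_i t̲_i`, and no feasible incentive-compatible mechanism has
a larger worst-case payoff; hence the optimal value of the robust mechanism design
problem under the support-only ambiguity set equals `max_i t̲_i`. -/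
theorem stmt_2 {ι : Type*} [Fintype ι] [Nonempty ι] [DecidableEq ι]
    (tlo thi c : ι → ℝ)
    (h0 : ∀ i, 0 ≤ tlo i) (hlt : ∀ i, tlo i < thi i) (hc : ∀ i, 0 < c i)
    (istar : ι) (hstar : ∀ i, tlo i ≤ tlo istar) :
    Feas tlo thi (fun _ i => if i = istar then 1 else 0) (fun _ _ => 0) ∧
    IC tlo thi (fun _ i => if i = istar then 1 else 0) (fun _ _ => 0) ∧
    (⨅ t : {t : ι → ℝ // InT tlo thi t},
        Pay c (fun _ i => if i = istar then 1 else 0) (fun _ _ => 0) t.1) =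
      Finset.univ.sup' Finset.univ_nonempty tlo ∧
    ∀ p q : (ι → ℝ) → ι → ℝ, Feas tlo thi p q → IC tlo thi p q →
      (⨅ t : {t : ι → ℝ // InT tlo thi t}, Pay c p q t.1) ≤
        Finset.univ.sup' Finset.univ_nonempty tlo := by
  have hT : InT tlo thi tlo := fun i => ⟨le_refl _, (hlt i).le⟩
  haveI : Nonempty {t : ι → ℝ // InT tlo thi t} := ⟨⟨tlo, hT⟩⟩
  have hsup : Finset.univ.sup' Finset.univ_nonempty tlo = tlo istar :=
    le_antisymm (Finset.sup'_le _ _ fun i _ => hstar i)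
      (Finset.le_sup' _ (Finset.mem_univ istar))
  have hPay : ∀ t : ι → ℝ,
      Pay c (fun _ i => if i = istar then 1 else 0) (fun _ _ => 0) t = t istar := by
    intro t
    simp [Pay, ite_mul, Finset.sum_ite_eq']
  refine ⟨?_, ?_, ?_, ?_⟩
  · intro t ht
    refine ⟨fun i => ?_, ?_⟩
    · by_cases h : i = istar <;> simp [h]
    · simp
  · intro i t ht s hs; simp
  · rw [hsup]
    apply le_antisymm
    · have hb : BddBelow (Set.range fun t : {t : ι → ℝ // InT tlo thi t} =>
          Pay c (fun _ i => if i = istar then 1 else 0) (fun _ _ => 0) t.1) := by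
        refine ⟨tlo istar, ?_⟩
        rintro x ⟨t, rfl⟩
        simpa only [hPay] using (t.2 istar).1
      exact (ciInf_le hb ⟨tlo, hT⟩).trans_eq (hPay tlo)
    · refine le_ciInf fun t => ?_
      simpa only [hPay] using (t.2 istar).1
  · intro p q hFeas _
    obtain ⟨hpq, hsum⟩ := hFeas tlo hT
    have hlow : Pay c p q tlo ≤ tlo istar := by
      have h1 : Pay c p q tlo ≤ ∑ i, p tlo i * tlo istar := by
        refine Finset.sum_le_sum fun i _ => ?_
        obtain ⟨h0q, hqp, hp1⟩ := hpq i
        nlinarith [hstar i, (hc i), h0 i, h0q.trans hqp]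
      calc Pay c p q tlo ≤ ∑ i, p tlo i * tlo istar := h1
        _ = (∑ i, p tlo i) * tlo istar := (Finset.sum_mul ..).symm
        _ ≤ 1 * tlo istar := mul_le_mul_of_nonneg_right hsum (h0 istar)
        _ = tlo istar := one_mul _
    have hb : BddBelow (Set.range fun t : {t : ι → ℝ // InT tlo thi t} =>
        Pay c p q t.1) := by
      refine ⟨-∑ i, c i, ?_⟩
      rintro x ⟨t, rfl⟩
      have : ∑ i, (-(c i)) ≤ Pay c p q t.1 := by
        refine Finset.sum_le_sum fun i _ => ?_
        obtain ⟨h0q, hqp, hp1⟩ := (hFeas t.1 t.2).1 i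
        have ht0 : 0 ≤ t.1 i := (h0 i).trans (t.2 i).1
        nlinarith [hc i]
      simpa [Finset.sum_neg_distrib] using this
    rw [hsup]
    exact (ciInf_le hb ⟨tlo, hT⟩).trans hlow
end

section
/- Every favored-agent mechanism is incentive compatible: for every agent i, every type profile t, and every misreport t'_i, the allocation probabilities satisfy p_i(t) ≥ p_i(t'_i, t_{-i}) − q_i(t'_i, t_{-i}). -/
/-- The quantity `max_{i ≠ i*} (t_i - c_i)`. -/
noncomputable def maxOther {ι : Type*} (c : ι → ℝ) (istar : ι) (t : ι → ℝ) : ℝ :=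
  ⨆ j : {j : ι // j ≠ istar}, (t j.1 - c j.1)

/-- Rule (i) of a favored-agent mechanism at scenario `t`: the favored agent `i*` receives
the good with probability one and nobody is inspected. -/
def RuleI {ι : Type*} (istar : ι) (p q : (ι → ℝ) → ι → ℝ) (t : ι → ℝ) : Prop :=
  p t istar = 1 ∧ q t istar = 0 ∧ ∀ i, i ≠ istar → p t i = 0 ∧ q t i = 0

/-- Rule (ii) of a favored-agent mechanism at scenario `t`: the lexicographically smallest
agent maximizing `t_i - c_i` receives the good and is inspected with probability one. -/
def RuleII {ι : Type*} [LinearOrder ι] (c : ι → ℝ) (p q : (ι → ℝ) → ι → ℝ)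
    (t : ι → ℝ) : Prop :=
  ∃ i', (∀ i, t i - c i ≤ t i' - c i') ∧ (∀ i, t i - c i = t i' - c i' → i' ≤ i) ∧
    p t i' = 1 ∧ q t i' = 1 ∧ ∀ i, i ≠ i' → p t i = 0 ∧ q t i = 0

/-- A favored-agent mechanism with favored agent `i*` and threshold `ν`: rule (i) applies
whenever `max_{i ≠ i*}(t_i - c_i) < ν`, rule (ii) applies whenever
`max_{i ≠ i*}(t_i - c_i) > ν`, and at ties one of the two rules is used throughout
(type (i) or type (ii) mechanisms). -/
def IsFA {ι : Type*} [Fintype ι] [LinearOrder ι] (tlo thi c : ι → ℝ) (istar : ι) (ν : ℝ)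
    (p q : (ι → ℝ) → ι → ℝ) : Prop :=
  (∀ t, InT tlo thi t → maxOther c istar t < ν → RuleI istar p q t) ∧
  (∀ t, InT tlo thi t → ν < maxOther c istar t → RuleII c p q t) ∧
  ((∀ t, InT tlo thi t → maxOther c istar t = ν → RuleI istar p q t) ∨
    (∀ t, InT tlo thi t → maxOther c istar t = ν → RuleII c p q t))

lemma rule_nonneg {ι : Type*} [LinearOrder ι] {c : ι → ℝ} {istar : ι}
    {p q : (ι → ℝ) → ι → ℝ} {t : ι → ℝ}
    (h : RuleI istar p q t ∨ RuleII c p q t) (i : ι) : 0 ≤ p t i := by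
  rcases h with ⟨h1, h2, h3⟩ | ⟨i', _, _, hp, hq, h3⟩
  · by_cases hi : i = istar
    · rw [hi, h1]; norm_num
    · rw [(h3 i hi).1]
  · by_cases hi : i = i'
    · rw [hi, hp]; norm_num
    · rw [(h3 i hi).1]

lemma ruleII_diff {ι : Type*} [LinearOrder ι] {c : ι → ℝ}
    {p q : (ι → ℝ) → ι → ℝ} {t : ι → ℝ}
    (h : RuleII c p q t) (i : ι) : p t i - q t i ≤ 0 := by
  obtain ⟨i', _, _, hp, hq, h3⟩ := h
  by_cases hi : i = i'
  · rw [hi, hp, hq]; norm_num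
  · rw [(h3 i hi).1, (h3 i hi).2]; norm_num

/-- Every favored-agent mechanism is incentive compatible: for every
agent `i`, every type profile `t` in the type space, and every misreport `s ∈ 𝒯_i`, the
allocation probabilities satisfy `p_i(t) ≥ p_i(s, t_{-i}) - q_i(s, t_{-i})`. -/
theorem stmt_3 {ι : Type*} [Fintype ι] [Nontrivial ι] [LinearOrder ι] [DecidableEq ι]
    (tlo thi c : ι → ℝ)
    (h0 : ∀ i, 0 ≤ tlo i) (hlt : ∀ i, tlo i < thi i) (hc : ∀ i, 0 < c i)
    (istar : ι) (ν : ℝ) (p q : (ι → ℝ) → ι → ℝ)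
    (hfa : IsFA tlo thi c istar ν p q) :
    ∀ i, ∀ t, InT tlo thi t → ∀ s ∈ Set.Icc (tlo i) (thi i),
      p (Function.update t i s) i - q (Function.update t i s) i ≤ p t i := by
  obtain ⟨hI, hII, hb⟩ := hfa
  intro i t ht s hs
  set t' := Function.update t i s with ht'def
  have ht' : InT tlo thi t' := by
    intro j
    by_cases hj : j = i
    · subst hj; simpa [ht'def, Function.update] using hs
    · simpa [ht'def, Function.update, hj] using ht j
  have ruleT : RuleI istar p q t ∨ RuleII c p q t := by
    rcases lt_trichotomy (maxOther c istar t) ν with h | h | h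
    · exact Or.inl (hI t ht h)
    · rcases hb with hb | hb
      · exact Or.inl (hb t ht h)
      · exact Or.inr (hb t ht h)
    · exact Or.inr (hII t ht h)
  have ruleT' : RuleI istar p q t' ∨ RuleII c p q t' := by
    rcases lt_trichotomy (maxOther c istar t') ν with h | h | h
    · exact Or.inl (hI t' ht' h)
    · rcases hb with hb | hb
      · exact Or.inl (hb t' ht' h)
      · exact Or.inr (hb t' ht' h)
    · exact Or.inr (hII t' ht' h)
  by_cases hii : i = istar
  · subst hii
    have hmax : maxOther c i t' = maxOther c i t := by
      unfold maxOther
      congr 1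
      funext j
      rw [ht'def, Function.update_of_ne j.2]
    rcases lt_trichotomy (maxOther c i t) ν with h | h | h
    · have r1 := hI t ht h
      have r1' := hI t' ht' (by rw [hmax]; exact h)
      rw [r1'.1, r1'.2.1, r1.1]; norm_num
    · rcases hb with hb | hb
      · have r1 := hb t ht h
        have r1' := hb t' ht' (by rw [hmax]; exact h)
        rw [r1'.1, r1'.2.1, r1.1]; norm_num
      · have r2 := hb t ht h
        have r2' := hb t' ht' (by rw [hmax]; exact h)
        have := ruleII_diff r2' i
        have := rule_nonneg (Or.inr r2 : RuleI i p q t ∨ RuleII c p q t) i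
        linarith
    · have r2 := hII t ht h
      have r2' := hII t' ht' (by rw [hmax]; exact h)
      have := ruleII_diff r2' i
      have := rule_nonneg (Or.inr r2 : RuleI i p q t ∨ RuleII c p q t) i
      linarith
  · have hle : p t' i - q t' i ≤ 0 := by
      rcases ruleT' with ⟨h1, h2, h3⟩ | h
      · rw [(h3 i hii).1, (h3 i hii).2]; norm_num
      · exact ruleII_diff h i
    have := rule_nonneg ruleT i
    linarith
end

section
/- Any favored-agent mechanism with favored agent i* ∈ argmax_i t̲_i and threshold ν* ≥ max_i t̲_i achieves payoff at least max_i t̲_i in every scenario t ∈ 𝒯, and hence is optimal in the robust mechanism design problem with support-only ambiguity set. -/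
/-- Any favored-agent mechanism with favored agent `i* ∈ argmax_i t̲_i`
and threshold `ν ≥ max_i t̲_i` achieves payoff at least `max_i t̲_i` in every scenario
`t ∈ 𝒯`; hence its worst-case payoff equals `max_i t̲_i`, so it is optimal in the robust
mechanism design problem with the support-only ambiguity set. -/
theorem stmt_4 {ι : Type*} [Fintype ι] [Nontrivial ι] [LinearOrder ι]
    (tlo thi c : ι → ℝ)
    (h0 : ∀ i, 0 ≤ tlo i) (hlt : ∀ i, tlo i < thi i) (hc : ∀ i, 0 < c i)
    (istar : ι) (hstar : ∀ i, tlo i ≤ tlo istar)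
    (ν : ℝ) (hν : Finset.univ.sup' Finset.univ_nonempty tlo ≤ ν)
    (p q : (ι → ℝ) → ι → ℝ) (hfa : IsFA tlo thi c istar ν p q) :
    (∀ t, InT tlo thi t → Finset.univ.sup' Finset.univ_nonempty tlo ≤ Pay c p q t) ∧
    (⨅ t : {t : ι → ℝ // InT tlo thi t}, Pay c p q t.1) =
      Finset.univ.sup' Finset.univ_nonempty tlo := by
  have hne : Nonempty {j : ι // j ≠ istar} := by
    obtain ⟨j, hj⟩ := exists_ne istar
    exact ⟨⟨j, hj⟩⟩
  set M := Finset.univ.sup' Finset.univ_nonempty tlo with hM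
  have hMeq : M = tlo istar :=
    le_antisymm (Finset.sup'_le _ _ fun i _ => hstar i)
      (Finset.le_sup' _ (Finset.mem_univ istar))
  have payI : ∀ t, RuleI istar p q t → Pay c p q t = t istar := by
    rintro t ⟨h1, h2, h3⟩
    unfold Pay
    rw [Finset.sum_eq_single istar]
    · rw [h1, h2]; ring
    · intro i _ hi; rw [(h3 i hi).1, (h3 i hi).2]; ring
    · intro h; exact absurd (Finset.mem_univ istar) h
  have payII : ∀ t, RuleII c p q t → maxOther c istar t ≤ Pay c p q t := by
    rintro t ⟨i', hmax, _, hp, hq, hz⟩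
    have hpay : Pay c p q t = t i' - c i' := by
      unfold Pay
      rw [Finset.sum_eq_single i']
      · rw [hp, hq]; ring
      · intro i _ hi; rw [(hz i hi).1, (hz i hi).2]; ring
      · intro h; exact absurd (Finset.mem_univ i') h
    rw [hpay]
    exact ciSup_le fun j => hmax j.1
  have key : ∀ t, InT tlo thi t → M ≤ Pay c p q t := by
    intro t ht
    have hI : RuleI istar p q t → M ≤ Pay c p q t := by
      intro h
      rw [payI t h, hMeq]
      exact (ht istar).1
    rcases lt_trichotomy (maxOther c istar t) ν with h | h | h
    · exact hI (hfa.1 t ht h)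
    · rcases hfa.2.2 with hr | hr
      · exact hI (hr t ht h)
      · calc M ≤ ν := hν
          _ = maxOther c istar t := h.symm
          _ ≤ Pay c p q t := payII t (hr t ht h)
    · calc M ≤ ν := hν
        _ ≤ maxOther c istar t := h.le
        _ ≤ Pay c p q t := payII t (hfa.2.1 t ht h)
  refine ⟨key, ?_⟩
  have hTlo : InT tlo thi tlo := fun i => ⟨le_refl _, (hlt i).le⟩
  have hlow : maxOther c istar tlo < ν := by
    obtain ⟨j0, hj0⟩ := Finite.exists_max (fun j : {j : ι // j ≠ istar} => tlo j.1 - c j.1)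
    have h1 : maxOther c istar tlo ≤ tlo j0.1 - c j0.1 := ciSup_le hj0
    have h2 : tlo j0.1 - c j0.1 < ν := by
      have := hc j0.1
      have h3 : tlo j0.1 ≤ M := Finset.le_sup' _ (Finset.mem_univ j0.1)
      linarith [hν]
    exact lt_of_le_of_lt h1 h2
  have hpaylo : Pay c p q tlo = M := by
    rw [payI tlo (hfa.1 tlo hTlo hlow), hMeq]
  have hbdd : BddBelow (Set.range fun t : {t : ι → ℝ // InT tlo thi t} => Pay c p q t.1) := by
    refine ⟨M, ?_⟩
    rintro x ⟨⟨t, ht⟩, rfl⟩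
    exact key t ht
  have : Nonempty {t : ι → ℝ // InT tlo thi t} := ⟨⟨tlo, hTlo⟩⟩
  refine le_antisymm ?_ ?_
  · calc (⨅ t : {t : ι → ℝ // InT tlo thi t}, Pay c p q t.1)
        ≤ Pay c p q tlo := ciInf_le hbdd ⟨tlo, hTlo⟩
      _ = M := hpaylo
  · exact le_ciInf fun t => key t.1 t.2
end

section
/- There exists a feasible incentive-compatible mechanism that is optimal in the robust mechanism design problem under the support-only ambiguity set but is neither a favored-agent mechanism nor a convex combination of favored-agent mechanisms. Concretely: modifying an optimal type-(i) favored-agent mechanism (with ν* ≥ max_i t̲_i and ν* > max_i (t̄_i − c_i)) by setting the inspection probability of the favored agent i* at the single scenario t̂ (with t̂_{i*} = t̄_{i*} and t̂_i = t̲_i for i ≠ i*) to min{1, (t̄_{i*} − t̲_{i*})/c_{i*}} yields a feasible mechanism whose worst-case payoff still equals max_i t̲_i, while p_{i*}(t̂) − q'_{i*}(t̂) < 1 = p_{i*}(t_{i*}, t̂_{-i*}) − q'_{i*}(t_{i*}, t̂_{-i*}) for all t_{i*} ≠ t̂_{i*}. -/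
/-- Modifying an optimal type-(i) favored-agent mechanism (with
`ν ≥ max_i t̲_i` and `ν > max_i (t̄_i - c_i)`) by raising the inspection probability of the
favored agent `i*` at the single scenario `t̂ = (t̄_{i*}, t̲_{-i*})` to
`min 1 ((t̄_{i*} - t̲_{i*})/c_{i*})` yields a mechanism that is feasible, incentive
compatible and optimal (worst-case payoff `max_i t̲_i`), yet is neither a favored-agent
mechanism nor a convex combination of favored-agent mechanisms; moreover
`p_{i*}(t̂) - q'_{i*}(t̂) < 1 = p_{i*}(s, t̂_{-i*}) - q'_{i*}(s, t̂_{-i*})` for all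
`s ≠ t̂_{i*}`. -/
theorem stmt_6 {ι : Type*} [Fintype ι] [Nontrivial ι] [LinearOrder ι] [DecidableEq ι]
    (tlo thi c : ι → ℝ)
    (h0 : ∀ i, 0 ≤ tlo i) (hlt : ∀ i, tlo i < thi i) (hc : ∀ i, 0 < c i)
    (istar : ι) (hstar : ∀ i, tlo i ≤ tlo istar)
    (ν : ℝ) (hν1 : Finset.univ.sup' Finset.univ_nonempty tlo ≤ ν)
    (hν2 : ∀ i, thi i - c i < ν)
    (p q : (ι → ℝ) → ι → ℝ) (hfa : IsFA tlo thi c istar ν p q)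
    (that : ι → ℝ) (hthat : that = Function.update tlo istar (thi istar))
    (q' : (ι → ℝ) → ι → ℝ)
    (hq'1 : q' that istar = min 1 ((thi istar - tlo istar) / c istar))
    (hq'2 : ∀ t i, ¬(t = that ∧ i = istar) → q' t i = q t i) :
    Feas tlo thi p q' ∧
    IC tlo thi p q' ∧
    (⨅ t : {t : ι → ℝ // InT tlo thi t}, Pay c p q' t.1) =
      Finset.univ.sup' Finset.univ_nonempty tlo ∧
    (∀ (j : ι) (ν' : ℝ), ¬ IsFA tlo thi c j ν' p q') ∧
    (¬ ∃ (K : ℕ) (π : Fin K → ℝ) (pk qk : Fin K → (ι → ℝ) → ι → ℝ)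
        (js : Fin K → ι) (νs : Fin K → ℝ),
        (∀ k, 0 ≤ π k) ∧ (∑ k, π k = 1) ∧
        (∀ k, IsFA tlo thi c (js k) (νs k) (pk k) (qk k)) ∧
        (∀ t, InT tlo thi t → ∀ i,
          p t i = ∑ k, π k * pk k t i ∧ q' t i = ∑ k, π k * qk k t i)) ∧
    p that istar - q' that istar < 1 ∧
    (∀ s ∈ Set.Icc (tlo istar) (thi istar), s ≠ thi istar →
      p (Function.update that istar s) istar - q' (Function.update that istar s) istar = 1) := by
  classical
  have hcne : c istar ≠ 0 := ne_of_gt (hc istar)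
  have hmin_pos : 0 < min 1 ((thi istar - tlo istar) / c istar) :=
    lt_min one_pos (div_pos (sub_pos.2 (hlt istar)) (hc istar))
  have hmin_le : min 1 ((thi istar - tlo istar) / c istar) ≤ 1 := min_le_left _ _
  have hInTlo : InT tlo thi tlo := fun i => ⟨le_refl _, (hlt i).le⟩
  have hInThat : InT tlo thi that := by
    intro i
    by_cases h : i = istar
    · subst h; rw [hthat, Function.update_self]; exact ⟨(hlt i).le, le_refl _⟩
    · rw [hthat, Function.update_of_ne h]; exact ⟨le_refl _, (hlt i).le⟩
  have hlo_ne : tlo ≠ that := by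
    intro h
    have h2 := congrFun h istar
    rw [hthat, Function.update_self] at h2
    exact absurd h2 (ne_of_lt (hlt istar))
  haveI hne' : Nonempty {j : ι // j ≠ istar} := by
    obtain ⟨j, hj⟩ := exists_ne istar
    exact ⟨⟨j, hj⟩⟩
  have hmax_lt : ∀ t, InT tlo thi t → maxOther c istar t < ν := by
    intro t ht
    obtain ⟨j0, hj0⟩ := Finite.exists_max (fun j : {j : ι // j ≠ istar} => t j.1 - c j.1)
    calc maxOther c istar t ≤ t j0.1 - c j0.1 := ciSup_le hj0
    _ ≤ thi j0.1 - c j0.1 := by have := (ht j0.1).2; linarith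
    _ < ν := hν2 _
  have hRI : ∀ t, InT tlo thi t → RuleI istar p q t := fun t ht =>
    hfa.1 t ht (hmax_lt t ht)
  have hmax_eq : maxOther c istar that = maxOther c istar tlo :=
    iSup_congr (fun j => by rw [hthat, Function.update_of_ne j.2])
  have hq'ne : ∀ t i, t ≠ that → q' t i = q t i := fun t i ht => hq'2 _ _ (fun h => ht h.1)
  have hq'lo : ∀ i, q' tlo i = q tlo i := fun i => hq'ne _ _ hlo_ne
  have hq'oth : ∀ t i, i ≠ istar → q' t i = q t i := fun t i hi => hq'2 _ _ (fun h => hi h.2)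
  have hq'nonneg : ∀ t, InT tlo thi t → ∀ i, 0 ≤ q' t i := by
    intro t ht i
    by_cases h : t = that ∧ i = istar
    · rw [h.1, h.2, hq'1]; exact hmin_pos.le
    · rw [hq'2 t i h]
      rcases hRI t ht with ⟨_, hq0, hoth⟩
      by_cases hi : i = istar
      · rw [hi, hq0]
      · rw [(hoth i hi).2]
  have hq'lep : ∀ t, InT tlo thi t → ∀ i, q' t i ≤ p t i := by
    intro t ht i
    rcases hRI t ht with ⟨hp1, hq0, hoth⟩
    by_cases h : t = that ∧ i = istar
    · obtain ⟨rfl, rfl⟩ := h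
      rw [hq'1, hp1]; exact hmin_le
    · rw [hq'2 t i h]
      by_cases hi : i = istar
      · rw [hi, hq0, hp1]; norm_num
      · rw [(hoth i hi).1, (hoth i hi).2]
  have noII : ∀ (P Q : (ι → ℝ) → ι → ℝ) (t : ι → ℝ),
      RuleI istar P Q t → RuleII c P Q t → False := by
    rintro P Q t ⟨_, hq0, hoth⟩ ⟨i', _, _, _, hqi', _⟩
    by_cases h : i' = istar
    · rw [h, hq0] at hqi'; norm_num at hqi'
    · rw [(hoth i' h).2] at hqi'; norm_num at hqi'
  have dichot : ∀ (j : ι) (ν' : ℝ) (P Q : (ι → ℝ) → ι → ℝ), IsFA tlo thi c j ν' P Q →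
      ∀ t, InT tlo thi t → RuleI j P Q t ∨ RuleII c P Q t := by
    intro j ν' P Q hFA t ht
    rcases lt_trichotomy (maxOther c j t) ν' with h | h | h
    · exact Or.inl (hFA.1 t ht h)
    · rcases hFA.2.2 with hb | hb
      · exact Or.inl (hb t ht h)
      · exact Or.inr (hb t ht h)
    · exact Or.inr (hFA.2.1 t ht h)
  have fa_that : ∀ (j : ι) (ν' : ℝ) (P Q : (ι → ℝ) → ι → ℝ), IsFA tlo thi c j ν' P Q →
      RuleI istar P Q tlo → j = istar ∧ RuleI istar P Q that := by
    intro j ν' P Q hFA hI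
    have hj : j = istar := by
      rcases dichot j ν' P Q hFA tlo hInTlo with hI' | hII
      · by_contra hnej
        have h1 : P tlo j = 1 := hI'.1
        have h0 : P tlo j = 0 := (hI.2.2 j hnej).1
        rw [h0] at h1; norm_num at h1
      · exact (noII P Q tlo hI hII).elim
    subst hj
    refine ⟨rfl, ?_⟩
    have hle : maxOther c j tlo ≤ ν' := by
      by_contra h
      push_neg at h
      exact noII P Q tlo hI (hFA.2.1 tlo hInTlo h)
    rcases lt_or_eq_of_le hle with h | h
    · exact hFA.1 that hInThat (by rw [hmax_eq]; exact h)
    · rcases hFA.2.2 with hb | hb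
      · exact hb that hInThat (by rw [hmax_eq, h])
      · exact (noII P Q tlo hI (hb tlo hInTlo h)).elim
  have hRIq'lo : RuleI istar p q' tlo := by
    rcases hRI tlo hInTlo with ⟨hp1, hq0, hoth⟩
    exact ⟨hp1, by rw [hq'lo istar, hq0],
      fun i hi => ⟨(hoth i hi).1, by rw [hq'lo i, (hoth i hi).2]⟩⟩
  have hPay : ∀ t, InT tlo thi t → Pay c p q' t = t istar - q' t istar * c istar := by
    intro t ht
    rcases hRI t ht with ⟨hp1, _, hoth⟩
    unfold Pay
    rw [Fintype.sum_eq_single istar (fun i hi => by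
      rw [(hoth i hi).1, hq'oth t i hi, (hoth i hi).2]; ring), hp1]
    ring
  have hPay_ge : ∀ t, InT tlo thi t → tlo istar ≤ Pay c p q' t := by
    intro t ht
    rw [hPay t ht]
    by_cases h : t = that
    · subst h
      have hts : t istar = thi istar := by rw [hthat, Function.update_self]
      rw [hq'1, hts]
      have hmc : min 1 ((thi istar - tlo istar) / c istar) * c istar ≤ thi istar - tlo istar := by
        calc min 1 ((thi istar - tlo istar) / c istar) * c istar
            ≤ ((thi istar - tlo istar) / c istar) * c istar :=
              mul_le_mul_of_nonneg_right (min_le_right _ _) (hc istar).le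
        _ = thi istar - tlo istar := div_mul_cancel₀ _ hcne
      linarith
    · rw [hq'ne t istar h]
      rcases hRI t ht with ⟨_, hq0, _⟩
      rw [hq0]
      have := (ht istar).1
      linarith
  have hsup : Finset.univ.sup' Finset.univ_nonempty tlo = tlo istar :=
    le_antisymm (Finset.sup'_le _ _ fun i _ => hstar i)
      (Finset.le_sup' _ (Finset.mem_univ istar))
  have hPaylo : Pay c p q' tlo = tlo istar := by
    rw [hPay tlo hInTlo, hq'lo, (hRI tlo hInTlo).2.1]; ring
  haveI : Nonempty {t : ι → ℝ // InT tlo thi t} := ⟨⟨tlo, hInTlo⟩⟩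
  have hinf : (⨅ t : {t : ι → ℝ // InT tlo thi t}, Pay c p q' t.1) = tlo istar := by
    apply le_antisymm
    · exact (ciInf_le ⟨tlo istar, by rintro x ⟨t, rfl⟩; exact hPay_ge t.1 t.2⟩
        ⟨tlo, hInTlo⟩).trans_eq hPaylo
    · exact le_ciInf fun t => hPay_ge t.1 t.2
  have hFeas : Feas tlo thi p q' := by
    intro t ht
    rcases hRI t ht with ⟨hp1, hq0, hoth⟩
    refine ⟨fun i => ⟨hq'nonneg t ht i, hq'lep t ht i, ?_⟩, ?_⟩
    · by_cases hi : i = istar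
      · rw [hi, hp1]
      · rw [(hoth i hi).1]; norm_num
    · rw [Fintype.sum_eq_single istar (fun i hi => (hoth i hi).1), hp1]
  have hIC : IC tlo thi p q' := by
    intro i t ht s hs
    have hInTu : InT tlo thi (Function.update t i s) := by
      intro j
      by_cases hj : j = i
      · subst hj; rw [Function.update_self]; exact hs
      · rw [Function.update_of_ne hj]; exact ht j
    by_cases hi : i = istar
    · subst hi
      rw [(hRI t ht).1]
      have h1 := hq'nonneg _ hInTu i
      have h2 : p (Function.update t i s) i = 1 := (hRI _ hInTu).1
      linarith
    · rw [((hRI _ hInTu).2.2 i hi).1, hq'oth _ i hi, ((hRI _ hInTu).2.2 i hi).2,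
        ((hRI t ht).2.2 i hi).1]
      norm_num
  have hnotFA : ∀ (j : ι) (ν' : ℝ), ¬ IsFA tlo thi c j ν' p q' := by
    intro j ν' hFA
    obtain ⟨-, hRIthat⟩ := fa_that j ν' p q' hFA hRIq'lo
    have h0 : q' that istar = 0 := hRIthat.2.1
    rw [hq'1] at h0
    exact absurd h0 (ne_of_gt hmin_pos)
  have h6 : p that istar - q' that istar < 1 := by
    rw [(hRI that hInThat).1, hq'1]
    linarith
  have hnotCC : ¬ ∃ (K : ℕ) (π : Fin K → ℝ) (pk qk : Fin K → (ι → ℝ) → ι → ℝ)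
      (js : Fin K → ι) (νs : Fin K → ℝ),
      (∀ k, 0 ≤ π k) ∧ (∑ k, π k = 1) ∧
      (∀ k, IsFA tlo thi c (js k) (νs k) (pk k) (qk k)) ∧
      (∀ t, InT tlo thi t → ∀ i,
        p t i = ∑ k, π k * pk k t i ∧ q' t i = ∑ k, π k * qk k t i) := by
    rintro ⟨K, π, pk, qk, js, νs, hπ0, hπ1, hFAk, hrep⟩
    have hdiff01 : ∀ k t, InT tlo thi t →
        (pk k t istar - qk k t istar = 0 ∨
          (pk k t istar - qk k t istar = 1 ∧ RuleI istar (pk k) (qk k) t)) := by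
      intro k t ht
      rcases dichot (js k) (νs k) (pk k) (qk k) (hFAk k) t ht with hI | hII
      · by_cases hj : js k = istar
        · rw [hj] at hI
          exact Or.inr ⟨by rw [hI.1, hI.2.1]; ring, hI⟩
        · left
          have h := hI.2.2 istar (fun h => hj h.symm)
          rw [h.1, h.2]; ring
      · obtain ⟨i', _, _, hp', hq', hoth'⟩ := hII
        left
        by_cases h : istar = i'
        · rw [h, hp', hq']; ring
        · rw [(hoth' istar h).1, (hoth' istar h).2]; ring
    have hlo := hrep tlo hInTlo istar
    have hsum1 : ∑ k, π k * (pk k tlo istar - qk k tlo istar) = 1 := by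
      have h1 : p tlo istar = 1 := (hRI tlo hInTlo).1
      have h2 : q' tlo istar = 0 := hRIq'lo.2.1
      simp only [mul_sub]
      rw [Finset.sum_sub_distrib, ← hlo.1, ← hlo.2, h1, h2]
      ring
    have hterm : ∀ k, π k ≠ 0 →
        pk k tlo istar - qk k tlo istar = 1 ∧ RuleI istar (pk k) (qk k) tlo := by
      have hsum0 : ∑ k, π k * (1 - (pk k tlo istar - qk k tlo istar)) = 0 := by
        simp only [mul_sub, mul_one]
        rw [Finset.sum_sub_distrib, hπ1]
        simp only [mul_sub] at hsum1
        rw [hsum1]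
        ring
      have hnn : ∀ k ∈ Finset.univ, 0 ≤ π k * (1 - (pk k tlo istar - qk k tlo istar)) := by
        intro k _
        apply mul_nonneg (hπ0 k)
        rcases hdiff01 k tlo hInTlo with h | ⟨h, _⟩ <;> rw [h] <;> norm_num
      have hall := (Finset.sum_eq_zero_iff_of_nonneg hnn).1 hsum0
      intro k hk
      have hk' := hall k (Finset.mem_univ k)
      have hd : pk k tlo istar - qk k tlo istar = 1 := by
        rcases mul_eq_zero.1 hk' with h | h
        · exact absurd h hk
        · linarith
      refine ⟨hd, ?_⟩
      rcases hdiff01 k tlo hInTlo with h | ⟨_, hI⟩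
      · rw [h] at hd; norm_num at hd
      · exact hI
    have hthatdiff : ∀ k, π k ≠ 0 → pk k that istar - qk k that istar = 1 := by
      intro k hk
      obtain ⟨_, hIlo⟩ := hterm k hk
      obtain ⟨_, hIthat⟩ := fa_that (js k) (νs k) (pk k) (qk k) (hFAk k) hIlo
      rw [hIthat.1, hIthat.2.1]; ring
    have hth := hrep that hInThat istar
    have hone : p that istar - q' that istar = 1 := by
      rw [hth.1, hth.2, ← Finset.sum_sub_distrib]
      have : ∀ k ∈ Finset.univ,
          π k * pk k that istar - π k * qk k that istar = π k := by
        intro k _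
        by_cases hk : π k = 0
        · rw [hk]; ring
        · have h := hthatdiff k hk
          linear_combination π k * h
      rw [Finset.sum_congr rfl this, hπ1]
    rw [hone] at h6
    exact lt_irrefl _ h6
  refine ⟨hFeas, hIC, hinf.trans hsup.symm, hnotFA, hnotCC, h6, ?_⟩
  intro s hs hsne
  have hInTu : InT tlo thi (Function.update that istar s) := by
    intro j
    by_cases hj : j = istar
    · subst hj; rw [Function.update_self]; exact hs
    · rw [Function.update_of_ne hj]; exact hInThat j
  have hune : Function.update that istar s ≠ that := by
    intro h
    have h2 := congrFun h istar
    rw [Function.update_self, hthat, Function.update_self] at h2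
    exact hsne h2
  rcases hRI _ hInTu with ⟨hp1, hq0, _⟩
  rw [hp1, hq'ne _ _ hune, hq0]
  ring
end

section
/- In the two-agent setting with t̲_1 > t̲_2, t̄_2 > c_2 + t̲_1, and t̄_1 > c_2 + t̲_1, any feasible incentive-compatible mechanism (p, q) whose payoff weakly dominates that of the type-(i) favored-agent mechanism with favored agent 1 and threshold t̲_1 in every scenario must satisfy p_1(t) = 1 and q_1(t) = 0 for all t with t_2 − c_2 ≤ t̲_1. -/
/-- Feasibility of a two-agent mechanism on the rectangle `[tlo1,thi1] × [tlo2,thi2]`. -/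
def Feas2 (tlo1 thi1 tlo2 thi2 : ℝ) (p1 p2 q1 q2 : ℝ → ℝ → ℝ) : Prop :=
  ∀ t1 ∈ Set.Icc tlo1 thi1, ∀ t2 ∈ Set.Icc tlo2 thi2,
    0 ≤ q1 t1 t2 ∧ q1 t1 t2 ≤ p1 t1 t2 ∧ p1 t1 t2 ≤ 1 ∧
    0 ≤ q2 t1 t2 ∧ q2 t1 t2 ≤ p2 t1 t2 ∧ p2 t1 t2 ≤ 1 ∧
    p1 t1 t2 + p2 t1 t2 ≤ 1

/-- Incentive compatibility of a two-agent mechanism. -/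
def IC2 (tlo1 thi1 tlo2 thi2 : ℝ) (p1 p2 q1 q2 : ℝ → ℝ → ℝ) : Prop :=
  ∀ t1 ∈ Set.Icc tlo1 thi1, ∀ t2 ∈ Set.Icc tlo2 thi2,
    (∀ s ∈ Set.Icc tlo1 thi1, p1 s t2 - q1 s t2 ≤ p1 t1 t2) ∧
    (∀ s ∈ Set.Icc tlo2 thi2, p2 t1 s - q2 t1 s ≤ p2 t1 t2)

/-- The principal's payoff of a two-agent mechanism in scenario `(t1, t2)`. -/
def Pay2 (c1 c2 : ℝ) (p1 p2 q1 q2 : ℝ → ℝ → ℝ) (t1 t2 : ℝ) : ℝ :=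
  p1 t1 t2 * t1 + p2 t1 t2 * t2 - q1 t1 t2 * c1 - q2 t1 t2 * c2

/-- Payoff of the type-(i) favored-agent mechanism with favored agent `1` and threshold
`t̲_1`: it earns `t_1` when `t_2 - c_2 ≤ t̲_1` and `max (t_1 - c_1) (t_2 - c_2)` otherwise. -/
noncomputable def RefPay (tlo1 c1 c2 : ℝ) (t1 t2 : ℝ) : ℝ :=
  if t2 - c2 ≤ tlo1 then t1 else max (t1 - c1) (t2 - c2)

/-- In the two-agent setting with `t̲_1 > t̲_2`, `t̄_2 > c_2 + t̲_1` and
`t̄_1 > c_2 + t̲_1`, any feasible incentive-compatible mechanism whose payoff weakly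
dominates that of the type-(i) favored-agent mechanism with favored agent `1` and threshold
`t̲_1` in every scenario must satisfy `p_1(t) = 1` and `q_1(t) = 0` whenever
`t_2 - c_2 ≤ t̲_1`. -/
theorem stmt_7 (tlo1 thi1 tlo2 thi2 c1 c2 : ℝ)
    (h02 : 0 ≤ tlo2) (h21 : tlo2 < tlo1) (h1 : tlo1 < thi1) (h2 : tlo2 < thi2)
    (hc1 : 0 < c1) (hc2 : 0 < c2)
    (hbig2 : c2 + tlo1 < thi2) (hbig1 : c2 + tlo1 < thi1)
    (p1 p2 q1 q2 : ℝ → ℝ → ℝ)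
    (hfeas : Feas2 tlo1 thi1 tlo2 thi2 p1 p2 q1 q2)
    (hic : IC2 tlo1 thi1 tlo2 thi2 p1 p2 q1 q2)
    (hdom : ∀ t1 ∈ Set.Icc tlo1 thi1, ∀ t2 ∈ Set.Icc tlo2 thi2,
      RefPay tlo1 c1 c2 t1 t2 ≤ Pay2 c1 c2 p1 p2 q1 q2 t1 t2) :
    ∀ t1 ∈ Set.Icc tlo1 thi1, ∀ t2 ∈ Set.Icc tlo2 thi2,
      t2 - c2 ≤ tlo1 → p1 t1 t2 = 1 ∧ q1 t1 t2 = 0 := by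
  intro t1 ht1 t2 ht2 hle
  have hthi1 : thi1 ∈ Set.Icc tlo1 thi1 := ⟨le_of_lt h1, le_refl _⟩
  obtain ⟨hq1a, hq1b, hp1a, hq2a, hq2b, hp2a, hsum⟩ := hfeas thi1 hthi1 t2 ht2
  have hdomA := hdom thi1 hthi1 t2 ht2
  rw [RefPay, if_pos hle] at hdomA
  have ht2lt : t2 < thi1 := by linarith
  have ht20 : 0 ≤ t2 := le_trans h02 ht2.1
  simp only [Pay2] at hdomA
  have hA : p1 thi1 t2 = 1 := by
    refine le_antisymm hp1a ?_
    nlinarith [mul_nonneg hq1a hc1.le, mul_nonneg hq2a hc2.le,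
      mul_nonneg (by linarith : (0:ℝ) ≤ 1 - p1 thi1 t2 - p2 thi1 t2) ht20]
  have hB : p2 thi1 t2 = 0 := by linarith
  have hR : q2 thi1 t2 = 0 := le_antisymm (by linarith) hq2a
  have hQ : q1 thi1 t2 = 0 := by
    refine le_antisymm ?_ hq1a
    nlinarith [mul_nonneg hq1a hc1.le]
  obtain ⟨hic1, -⟩ := hic t1 ht1 t2 ht2
  have hkey := hic1 thi1 hthi1
  rw [hA, hQ] at hkey
  obtain ⟨hq1a', hq1b', hp1a', hq2a', hq2b', hp2a', hsum'⟩ := hfeas t1 ht1 t2 ht2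
  have hp1 : p1 t1 t2 = 1 := le_antisymm hp1a' (by linarith)
  have hp2 : p2 t1 t2 = 0 := by linarith
  have hq2 : q2 t1 t2 = 0 := le_antisymm (by linarith) hq2a'
  have hdomB := hdom t1 ht1 t2 ht2
  rw [RefPay, if_pos hle] at hdomB
  simp only [Pay2] at hdomB
  rw [hp1, hp2, hq2] at hdomB
  refine ⟨hp1, le_antisymm ?_ hq1a'⟩
  nlinarith [mul_nonneg hq1a' hc1.le]
end

section
/- In the two-agent setting with t̲_1 > t̲_2, t̄_2 > c_2 + t̲_1, and t̄_1 > c_2 + t̲_1, any feasible incentive-compatible mechanism whose scenario-wise payoff weakly dominates that of the type-(i) favored-agent mechanism with favored agent 1 and threshold t̲_1 must generate exactly the same payoff as that favored-agent mechanism in every scenario t ∈ 𝒯; consequently the favored-agent mechanism is Pareto robustly optimal for the support-only ambiguity set. -/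
/-- In the two-agent setting with `t̲_1 > t̲_2`, `t̄_2 > c_2 + t̲_1` and
`t̄_1 > c_2 + t̲_1`, any feasible incentive-compatible mechanism whose scenario-wise payoff
weakly dominates that of the type-(i) favored-agent mechanism with favored agent `1` and
threshold `t̲_1` generates exactly the same payoff in every scenario; consequently no
feasible incentive-compatible mechanism Pareto robustly dominates that favored-agent
mechanism, i.e. it is Pareto robustly optimal for the support-only ambiguity set. -/
theorem stmt_8 (tlo1 thi1 tlo2 thi2 c1 c2 : ℝ)
    (h02 : 0 ≤ tlo2) (h21 : tlo2 < tlo1) (h1 : tlo1 < thi1) (h2 : tlo2 < thi2)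
    (hc1 : 0 < c1) (hc2 : 0 < c2)
    (hbig2 : c2 + tlo1 < thi2) (hbig1 : c2 + tlo1 < thi1) :
    (∀ p1 p2 q1 q2 : ℝ → ℝ → ℝ,
      Feas2 tlo1 thi1 tlo2 thi2 p1 p2 q1 q2 →
      IC2 tlo1 thi1 tlo2 thi2 p1 p2 q1 q2 →
      (∀ t1 ∈ Set.Icc tlo1 thi1, ∀ t2 ∈ Set.Icc tlo2 thi2,
        RefPay tlo1 c1 c2 t1 t2 ≤ Pay2 c1 c2 p1 p2 q1 q2 t1 t2) →
      ∀ t1 ∈ Set.Icc tlo1 thi1, ∀ t2 ∈ Set.Icc tlo2 thi2,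
        Pay2 c1 c2 p1 p2 q1 q2 t1 t2 = RefPay tlo1 c1 c2 t1 t2) ∧
    ¬ ∃ p1 p2 q1 q2 : ℝ → ℝ → ℝ,
        Feas2 tlo1 thi1 tlo2 thi2 p1 p2 q1 q2 ∧
        IC2 tlo1 thi1 tlo2 thi2 p1 p2 q1 q2 ∧
        (∀ t1 ∈ Set.Icc tlo1 thi1, ∀ t2 ∈ Set.Icc tlo2 thi2,
          RefPay tlo1 c1 c2 t1 t2 ≤ Pay2 c1 c2 p1 p2 q1 q2 t1 t2) ∧
        (∃ t1 ∈ Set.Icc tlo1 thi1, ∃ t2 ∈ Set.Icc tlo2 thi2,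
          RefPay tlo1 c1 c2 t1 t2 < Pay2 c1 c2 p1 p2 q1 q2 t1 t2) := by
  have ht2lo_mem : tlo2 ∈ Set.Icc tlo2 thi2 := ⟨le_rfl, h2.le⟩
  have hthi1_mem : thi1 ∈ Set.Icc tlo1 thi1 := ⟨h1.le, le_rfl⟩
  have htlo1_mem : tlo1 ∈ Set.Icc tlo1 thi1 := ⟨le_rfl, h1.le⟩
  have main : ∀ p1 p2 q1 q2 : ℝ → ℝ → ℝ,
      Feas2 tlo1 thi1 tlo2 thi2 p1 p2 q1 q2 →
      IC2 tlo1 thi1 tlo2 thi2 p1 p2 q1 q2 →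
      (∀ t1 ∈ Set.Icc tlo1 thi1, ∀ t2 ∈ Set.Icc tlo2 thi2,
        RefPay tlo1 c1 c2 t1 t2 ≤ Pay2 c1 c2 p1 p2 q1 q2 t1 t2) →
      ∀ t1 ∈ Set.Icc tlo1 thi1, ∀ t2 ∈ Set.Icc tlo2 thi2,
        Pay2 c1 c2 p1 p2 q1 q2 t1 t2 = RefPay tlo1 c1 c2 t1 t2 := by
    intro p1 p2 q1 q2 hF hIC hdom
    -- Step A : in region t2 - c2 ≤ tlo1, the mechanism gives the good to 1 for free
    have stepA : ∀ t1 ∈ Set.Icc tlo1 thi1, ∀ t2 ∈ Set.Icc tlo2 thi2, t2 - c2 ≤ tlo1 →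
        p1 t1 t2 = 1 ∧ q1 t1 t2 = 0 ∧ p2 t1 t2 = 0 ∧ q2 t1 t2 = 0 := by
      intro t1 ht1 t2 ht2 hA
      have ht2nn : (0:ℝ) ≤ t2 := le_trans h02 ht2.1
      have ht2lt : t2 < thi1 := by linarith [ht2.1]
      obtain ⟨hq1n, hq1p, hp1u, hq2n, hq2p, hp2u, hsum⟩ := hF thi1 hthi1_mem t2 ht2
      have hdom' := hdom thi1 hthi1_mem t2 ht2
      rw [RefPay, if_pos hA, Pay2] at hdom'
      have hA1 : p1 thi1 t2 = 1 := by
        refine le_antisymm hp1u ?_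
        nlinarith [mul_nonneg (by linarith : (0:ℝ) ≤ 1 - p1 thi1 t2 - p2 thi1 t2) ht2nn,
          mul_nonneg hq1n hc1.le, mul_nonneg hq2n hc2.le]
      have hB0 : p2 thi1 t2 = 0 := by linarith
      have hY0 : q2 thi1 t2 = 0 := by linarith
      have hX0 : q1 thi1 t2 = 0 := by
        refine le_antisymm ?_ hq1n
        nlinarith [mul_nonneg hq2n hc2.le]
      have hIC1 := (hIC t1 ht1 t2 ht2).1 thi1 hthi1_mem
      rw [hA1, hX0] at hIC1
      obtain ⟨hq1n', hq1p', hp1u', hq2n', hq2p', hp2u', hsum'⟩ := hF t1 ht1 t2 ht2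
      have hp1 : p1 t1 t2 = 1 := le_antisymm hp1u' (by linarith)
      have hp2 : p2 t1 t2 = 0 := by linarith
      have hq2' : q2 t1 t2 = 0 := by linarith
      have hdom'' := hdom t1 ht1 t2 ht2
      rw [RefPay, if_pos hA, Pay2, hp1, hp2, hq2'] at hdom''
      have hq1' : q1 t1 t2 = 0 := by
        refine le_antisymm ?_ hq1n'
        nlinarith
      exact ⟨hp1, hq1', hp2, hq2'⟩
    -- Step 2 : p2 = q2 everywhere
    have hpq2 : ∀ t1 ∈ Set.Icc tlo1 thi1, ∀ t2 ∈ Set.Icc tlo2 thi2,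
        p2 t1 t2 = q2 t1 t2 := by
      intro t1 ht1 t2 ht2
      have h0 := stepA t1 ht1 tlo2 ht2lo_mem (by linarith)
      have hIC2 := (hIC t1 ht1 tlo2 ht2lo_mem).2 t2 ht2
      rw [h0.2.2.1] at hIC2
      have hq2p := (hF t1 ht1 t2 ht2).2.2.2.2.1
      linarith
    -- Step B : in region t2 - c2 > tlo1, p1 = q1
    have stepB : ∀ t1 ∈ Set.Icc tlo1 thi1, ∀ t2 ∈ Set.Icc tlo2 thi2, tlo1 < t2 - c2 →
        p1 t1 t2 = q1 t1 t2 := by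
      intro t1 ht1 t2 ht2 hB
      obtain ⟨hq1n, hq1p, hp1u, hq2n, hq2p, hp2u, hsum⟩ := hF tlo1 htlo1_mem t2 ht2
      have hdom' := hdom tlo1 htlo1_mem t2 ht2
      rw [RefPay, if_neg (not_le.2 hB), Pay2,
        max_eq_right (by linarith : tlo1 - c1 ≤ t2 - c2)] at hdom'
      have hpq := hpq2 tlo1 htlo1_mem t2 ht2
      rw [hpq] at hdom' hsum hp2u
      have h10 : p1 tlo1 t2 = 0 := by
        refine le_antisymm ?_ (le_trans hq1n hq1p)
        nlinarith [mul_nonneg (by linarith : (0:ℝ) ≤ 1 - p1 tlo1 t2 - q2 tlo1 t2)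
          (by linarith : (0:ℝ) ≤ t2 - c2), mul_nonneg hq1n hc1.le]
      have hIC1 := (hIC tlo1 htlo1_mem t2 ht2).1 t1 ht1
      rw [h10] at hIC1
      have hq1p' := (hF t1 ht1 t2 ht2).2.1
      linarith
    -- combine
    intro t1 ht1 t2 ht2
    rcases le_or_gt (t2 - c2) tlo1 with hA | hB
    · obtain ⟨hp1, hq1, hp2, hq2'⟩ := stepA t1 ht1 t2 ht2 hA
      rw [Pay2, RefPay, if_pos hA, hp1, hq1, hp2, hq2']
      ring
    · have hpqa := stepB t1 ht1 t2 ht2 hB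
      have hpqb := hpq2 t1 ht1 t2 ht2
      have hdom' := hdom t1 ht1 t2 ht2
      rw [RefPay, if_neg (not_le.2 hB)] at hdom' ⊢
      refine le_antisymm ?_ hdom'
      obtain ⟨hq1n, hq1p, hp1u, hq2n, hq2p, hp2u, hsum⟩ := hF t1 ht1 t2 ht2
      rw [Pay2, hpqa, hpqb] at *
      have hm1 : t1 - c1 ≤ max (t1 - c1) (t2 - c2) := le_max_left _ _
      have hm2 : t2 - c2 ≤ max (t1 - c1) (t2 - c2) := le_max_right _ _
      have hmpos : (0:ℝ) ≤ max (t1 - c1) (t2 - c2) := le_trans (by linarith) hm2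
      nlinarith [mul_le_mul_of_nonneg_left hm1 (le_trans hq1n le_rfl),
        mul_le_mul_of_nonneg_left hm2 (le_trans hq2n le_rfl),
        mul_nonneg (by linarith : (0:ℝ) ≤ 1 - q1 t1 t2 - q2 t1 t2) hmpos]
  refine ⟨main, ?_⟩
  rintro ⟨p1, p2, q1, q2, hF, hIC, hdom, t1, ht1, t2, ht2, hlt⟩
  have := main p1 p2 q1 q2 hF hIC hdom t1 ht1 t2 ht2
  linarith
end

section
/- For the Markov ambiguity set 𝒫 = {ℙ on 𝒯 : E_ℙ[t̃_i] ∈ [μ̲_i, μ̄_i] for all i}, the worst-case expectation inf_{ℙ ∈ 𝒫} E_ℙ[max_i t̃_i] equals max_i μ̲_i. -/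
open MeasureTheory

/-- Membership in the Markov ambiguity set: a probability distribution supported on the
type space whose marginal means lie in `[mlo i, mhi i]`. -/
def InP {ι : Type*} [Fintype ι] (tlo thi mlo mhi : ι → ℝ) (P : Measure (ι → ℝ)) : Prop :=
  IsProbabilityMeasure P ∧ (∀ᵐ t ∂P, InT tlo thi t) ∧
    ∀ i, ∫ t, t i ∂P ∈ Set.Icc (mlo i) (mhi i)

/-- For the Markov ambiguity set
`𝒫 = {ℙ on 𝒯 : E_ℙ[t̃_i] ∈ [μ̲_i, μ̄_i] ∀i}`, the worst-case expectation
`inf_{ℙ ∈ 𝒫} E_ℙ[max_i t̃_i]` equals `max_i μ̲_i`. -/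
theorem stmt_9 {ι : Type*} [Fintype ι] [Nonempty ι]
    (tlo thi mlo mhi : ι → ℝ)
    (h1 : ∀ i, tlo i < mlo i) (h2 : ∀ i, mlo i ≤ mhi i) (h3 : ∀ i, mhi i < thi i) :
    sInf {x : ℝ | ∃ P : Measure (ι → ℝ), InP tlo thi mlo mhi P ∧
        x = ∫ t, Finset.univ.sup' Finset.univ_nonempty t ∂P} =
      Finset.univ.sup' Finset.univ_nonempty mlo := by
  set v := Finset.univ.sup' Finset.univ_nonempty mlo with hv
  have hmeas : Measurable (fun t : ι → ℝ => Finset.univ.sup' Finset.univ_nonempty t) := by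
    have heq : (fun t : ι → ℝ => Finset.univ.sup' Finset.univ_nonempty t)
        = Finset.univ.sup' Finset.univ_nonempty (fun i (t : ι → ℝ) => t i) := by
      funext t; rw [Finset.sup'_apply]
    rw [heq]
    exact Finset.measurable_sup' _ (fun i _ => measurable_pi_apply i)
  -- v ∈ S via the Dirac measure at mlo
  have hdirac : (v : ℝ) ∈ {x : ℝ | ∃ P : Measure (ι → ℝ), InP tlo thi mlo mhi P ∧
        x = ∫ t, Finset.univ.sup' Finset.univ_nonempty t ∂P} := by
    refine ⟨Measure.dirac mlo, ⟨inferInstance, ?_, ?_⟩, ?_⟩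
    · have hms : MeasurableSet {t : ι → ℝ | InT tlo thi t} := by
        have he : {t : ι → ℝ | InT tlo thi t}
            = ⋂ i, (fun t : ι → ℝ => t i) ⁻¹' Set.Icc (tlo i) (thi i) := by
          ext t; simp [InT, Set.mem_iInter]
        rw [he]
        exact MeasurableSet.iInter fun i => (measurable_pi_apply i) measurableSet_Icc
      rw [ae_dirac_iff hms]
      exact fun i => ⟨(h1 i).le, ((h2 i).trans (h3 i).le)⟩
    · intro i
      rw [integral_dirac]
      exact ⟨le_rfl, h2 i⟩
    · rw [integral_dirac]
  -- lower bound
  have hlb : ∀ x ∈ {x : ℝ | ∃ P : Measure (ι → ℝ), InP tlo thi mlo mhi P ∧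
        x = ∫ t, Finset.univ.sup' Finset.univ_nonempty t ∂P}, v ≤ x := by
    rintro x ⟨P, ⟨hP, hsupp, hmean⟩, rfl⟩
    have C : ℝ := 0
    -- bound constant
    set M : ℝ := (Finset.univ.sup' Finset.univ_nonempty (fun i => max |tlo i| |thi i|)) with hM
    have hbound : ∀ᵐ t ∂P, ‖Finset.univ.sup' Finset.univ_nonempty t‖ ≤ M := by
      filter_upwards [hsupp] with t ht
      obtain ⟨j, _, hj⟩ := Finset.exists_mem_eq_sup' Finset.univ_nonempty t
      rw [hj, Real.norm_eq_abs, abs_le]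
      constructor
      · calc -M ≤ -(max |tlo j| |thi j|) := by
              simp only [neg_le_neg_iff]
              exact Finset.le_sup' (f := fun i => max |tlo i| |thi i|) (Finset.mem_univ j)
          _ ≤ -|tlo j| := by simp [le_max_left]
          _ ≤ tlo j := neg_abs_le _
          _ ≤ t j := (ht j).1
      · calc t j ≤ thi j := (ht j).2
          _ ≤ |thi j| := le_abs_self _
          _ ≤ max |tlo j| |thi j| := le_max_right _ _
          _ ≤ M := Finset.le_sup' (f := fun i => max |tlo i| |thi i|) (Finset.mem_univ j)
    have hboundj : ∀ j, ∀ᵐ t ∂P, ‖t j‖ ≤ M := by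
      intro j
      filter_upwards [hsupp] with t ht
      rw [Real.norm_eq_abs, abs_le]
      constructor
      · calc -M ≤ -(max |tlo j| |thi j|) := by
              simp only [neg_le_neg_iff]
              exact Finset.le_sup' (f := fun i => max |tlo i| |thi i|) (Finset.mem_univ j)
          _ ≤ -|tlo j| := by simp [le_max_left]
          _ ≤ tlo j := neg_abs_le _
          _ ≤ t j := (ht j).1
      · calc t j ≤ thi j := (ht j).2
          _ ≤ |thi j| := le_abs_self _
          _ ≤ max |tlo j| |thi j| := le_max_right _ _
          _ ≤ M := Finset.le_sup' (f := fun i => max |tlo i| |thi i|) (Finset.mem_univ j)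
    have hint : Integrable (fun t : ι → ℝ => Finset.univ.sup' Finset.univ_nonempty t) P :=
      (integrable_const M).mono' hmeas.aestronglyMeasurable hbound
    have hintj : ∀ j, Integrable (fun t : ι → ℝ => t j) P := fun j =>
      (integrable_const M).mono' (measurable_pi_apply j).aestronglyMeasurable (hboundj j)
    refine Finset.sup'_le _ _ (fun j _ => ?_)
    calc mlo j ≤ ∫ t, t j ∂P := (hmean j).1
      _ ≤ ∫ t, Finset.univ.sup' Finset.univ_nonempty t ∂P := by
          refine integral_mono (hintj j) hint (fun t => ?_)
          exact Finset.le_sup' _ (Finset.mem_univ j)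
  exact le_antisymm (csInf_le ⟨v, fun x hx => hlb x hx⟩ hdirac) (le_csInf ⟨v, hdirac⟩ hlb)
end

section
/- Under the Markov ambiguity set, the optimal value of the distributionally robust mechanism design problem equals max_i μ̲_i, and it is attained by the mechanism that always allocates the good to some i* ∈ argmax_i μ̲_i without inspection. -/
open MeasureTheory

/-- Under the Markov ambiguity set, the optimal value of the
distributionally robust mechanism design problem equals `max_i μ̲_i`, attained by the
mechanism that always allocates the good to some `i* ∈ argmax_i μ̲_i` without inspection:
that mechanism is feasible and incentive compatible, its worst-case expected payoff equals
`max_i μ̲_i`, and every feasible incentive-compatible mechanism has worst-case expected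
payoff at most `max_i μ̲_i`. -/
theorem stmt_10 {ι : Type*} [Fintype ι] [Nonempty ι] [DecidableEq ι]
    (tlo thi mlo mhi c : ι → ℝ)
    (h0 : ∀ i, 0 ≤ tlo i) (h1 : ∀ i, tlo i < mlo i) (h2 : ∀ i, mlo i ≤ mhi i)
    (h3 : ∀ i, mhi i < thi i) (hc : ∀ i, 0 < c i)
    (istar : ι) (hstar : ∀ i, mlo i ≤ mlo istar) :
    Feas tlo thi (fun _ i => if i = istar then 1 else 0) (fun _ _ => 0) ∧
    IC tlo thi (fun _ i => if i = istar then 1 else 0) (fun _ _ => 0) ∧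
    sInf {x : ℝ | ∃ P : Measure (ι → ℝ), InP tlo thi mlo mhi P ∧
        x = ∫ t, Pay c (fun _ i => if i = istar then 1 else 0) (fun _ _ => 0) t ∂P} =
      Finset.univ.sup' Finset.univ_nonempty mlo ∧
    ∀ p q : (ι → ℝ) → ι → ℝ,
      (∀ i, Measurable fun t => p t i) → (∀ i, Measurable fun t => q t i) →
      Feas tlo thi p q → IC tlo thi p q →
      sInf {x : ℝ | ∃ P : Measure (ι → ℝ), InP tlo thi mlo mhi P ∧
          x = ∫ t, Pay c p q t ∂P} ≤
        Finset.univ.sup' Finset.univ_nonempty mlo := by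
  classical
  have hmlo0 : ∀ i, 0 < mlo i := fun i => lt_of_le_of_lt (h0 i) (h1 i)
  -- the worst-case distribution: dirac at t0 = mlo
  set t0 : ι → ℝ := fun i => mlo i with ht0
  have ht0T : InT tlo thi t0 := fun i =>
    ⟨le_of_lt (h1 i), le_of_lt (lt_of_le_of_lt (h2 i) (h3 i))⟩
  have hP0 : InP tlo thi mlo mhi (Measure.dirac t0) := by
    refine ⟨inferInstance, ?_, ?_⟩
    · rw [MeasureTheory.ae_dirac_eq]; exact ht0T
    · intro i
      rw [integral_dirac' (fun t : ι → ℝ => t i) t0 (measurable_pi_apply i).stronglyMeasurable]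
      exact ⟨le_refl _, h2 i⟩
  have hsup : Finset.univ.sup' Finset.univ_nonempty mlo = mlo istar :=
    le_antisymm (Finset.sup'_le _ _ fun i _ => hstar i)
      (Finset.le_sup' _ (Finset.mem_univ istar))
  -- the simple mechanism's payoff
  have hPaySimple : ∀ t : ι → ℝ,
      Pay c (fun _ i => if i = istar then 1 else 0) (fun _ _ => 0) t = t istar := by
    intro t
    simp [Pay]
  have hFeas : Feas tlo thi (fun _ i => if i = istar then 1 else 0) (fun _ _ => 0) := by
    intro t _
    refine ⟨fun i => ?_, by simp⟩
    by_cases h : i = istar <;> simp [h]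
  -- generic lower bound for any feasible mechanism
  have hbdd : ∀ p q : (ι → ℝ) → ι → ℝ, Feas tlo thi p q →
      ∀ x ∈ {x : ℝ | ∃ P : Measure (ι → ℝ), InP tlo thi mlo mhi P ∧
          x = ∫ t, Pay c p q t ∂P}, -(∑ i, c i) ≤ x := by
    intro p q hF x hx
    obtain ⟨P, ⟨hProb, hae, _⟩, rfl⟩ := hx
    have hpt : ∀ t, InT tlo thi t → -(∑ i, c i) ≤ Pay c p q t := by
      intro t ht
      have : ∑ i, (-(c i)) ≤ ∑ i, (p t i * t i - q t i * c i) := by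
        refine Finset.sum_le_sum fun i _ => ?_
        obtain ⟨hq0, hqp, hp1⟩ := (hF t ht).1 i
        have hti : 0 ≤ t i := le_trans (h0 i) (ht i).1
        nlinarith [hc i]
      simpa [Pay, Finset.sum_neg_distrib] using this
    by_cases hInt : Integrable (Pay c p q) P
    · have h1' : (fun _ : ι → ℝ => -(∑ i, c i)) ≤ᵐ[P] Pay c p q :=
        hae.mono fun t ht => hpt t ht
      calc -(∑ i, c i) = ∫ _, -(∑ i, c i) ∂P := by simp
        _ ≤ ∫ t, Pay c p q t ∂P := integral_mono_ae (integrable_const _) hInt h1'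
    · rw [integral_undef hInt]
      have : (0:ℝ) ≤ ∑ i, c i := Finset.sum_nonneg fun i _ => (hc i).le
      linarith
  refine ⟨hFeas, ?_, ?_, ?_⟩
  · -- IC
    intro i t ht s hs
    simp
  · -- sInf = mlo istar
    rw [hsup]
    have hmem : mlo istar ∈ {x : ℝ | ∃ P : Measure (ι → ℝ), InP tlo thi mlo mhi P ∧
        x = ∫ t, Pay c (fun _ i => if i = istar then 1 else 0) (fun _ _ => 0) t ∂P} := by
      refine ⟨Measure.dirac t0, hP0, ?_⟩
      rw [show (fun t => Pay c (fun _ i => if i = istar then 1 else 0) (fun _ _ => 0) t)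
          = fun t : ι → ℝ => t istar from funext hPaySimple]
      rw [integral_dirac' (fun t : ι → ℝ => t istar) t0 (measurable_pi_apply istar).stronglyMeasurable]
    have hlb : ∀ x ∈ {x : ℝ | ∃ P : Measure (ι → ℝ), InP tlo thi mlo mhi P ∧
        x = ∫ t, Pay c (fun _ i => if i = istar then 1 else 0) (fun _ _ => 0) t ∂P},
        mlo istar ≤ x := by
      rintro x ⟨P, ⟨hProb, hae, hmean⟩, rfl⟩
      rw [show (fun t => Pay c (fun _ i => if i = istar then 1 else 0) (fun _ _ => 0) t)
          = fun t : ι → ℝ => t istar from funext hPaySimple]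
      exact (hmean istar).1
    exact le_antisymm (csInf_le ⟨mlo istar, hlb⟩ hmem) (le_csInf ⟨_, hmem⟩ hlb)
  · -- upper bound for any mechanism
    intro p q hpm hqm hF hIC
    rw [hsup]
    have hPaym : Measurable (Pay c p q) := by
      apply Finset.measurable_sum
      intro i _
      exact ((hpm i).mul (measurable_pi_apply i)).sub ((hqm i).mul_const (c i))
    have hmem : Pay c p q t0 ∈ {x : ℝ | ∃ P : Measure (ι → ℝ), InP tlo thi mlo mhi P ∧
        x = ∫ t, Pay c p q t ∂P} := by
      refine ⟨Measure.dirac t0, hP0, ?_⟩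
      rw [integral_dirac' (Pay c p q) t0 hPaym.stronglyMeasurable]
    have hle : Pay c p q t0 ≤ mlo istar := by
      obtain ⟨hbox, hsum⟩ := hF t0 ht0T
      have h1' : Pay c p q t0 ≤ ∑ i, p t0 i * mlo istar := by
        refine Finset.sum_le_sum fun i _ => ?_
        obtain ⟨hq0, hqp, hp1⟩ := hbox i
        have : p t0 i * t0 i ≤ p t0 i * mlo istar :=
          mul_le_mul_of_nonneg_left (hstar i) (le_trans hq0 hqp)
        nlinarith [hc i]
      have h2' : ∑ i, p t0 i * mlo istar ≤ mlo istar := by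
        rw [← Finset.sum_mul]
        nlinarith [(hmlo0 istar)]
      linarith
    exact le_trans (csInf_le ⟨-(∑ i, c i), hbdd p q hF⟩ hmem) hle
end

section
/- Any favored-agent mechanism with favored agent i* ∈ argmax_i μ̲_i and threshold ν* ≥ t̄_{i*} achieves payoff at least t_{i*} in every scenario t ∈ 𝒯, and hence its worst-case expected payoff over the Markov ambiguity set is at least max_i μ̲_i, so it is optimal. -/
open MeasureTheory

/-!
Whenever rule (ii) applies, some other agent has `t_j - c_j ≥ ν ≥ t̄_{i*} ≥ t_{i*}`, and rule (ii)
pays `max_i (t_i - c_i)`; under rule (i) the payoff is exactly `t_{i*}`. So the payoff dominates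
`t_{i*}` pointwise on `𝒯`, and its expectation dominates `E[t_{i*}] ≥ μ̲_{i*} = max_i μ̲_i`. The bound
is attained by the point mass at `μ̲`, where every other agent has `μ̲_j - c_j < μ̲_{i*} < ν`, so
rule (i) applies. As `p` and `q` are arbitrary functions, the payoff is integrable because on `𝒯`
it agrees with a bounded function that is measurable piecewise over the region where rule (i) is
used.
-/

theorem integrable_of_ae_mem_Icc {α : Type*} [MeasurableSpace α] {μ : Measure α}
    [IsFiniteMeasure μ] {f : α → ℝ} {a b : ℝ} (hf : AEStronglyMeasurable f μ)
    (h : ∀ᵐ x ∂μ, f x ∈ Set.Icc a b) : Integrable f μ :=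
  Integrable.of_bound hf (max |a| |b|) (h.mono fun _ hx => abs_le_max_abs_abs hx.1 hx.2)

section MaxOther

variable {ι : Type*} {c : ι → ℝ} {istar : ι} {t : ι → ℝ}

theorem measurable_maxOther [Countable ι] (c : ι → ℝ) (istar : ι) :
    Measurable (maxOther c istar) :=
  Measurable.iSup fun _ => (measurable_pi_apply _).sub_const _

theorem maxOther_le [Nontrivial ι] {a : ℝ} (h : ∀ j ≠ istar, t j - c j ≤ a) :
    maxOther c istar t ≤ a :=
  haveI := nonempty_subtype.2 (exists_ne istar)
  ciSup_le fun j => h j j.2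

theorem maxOther_le_iSup [Finite ι] [Nontrivial ι] :
    maxOther c istar t ≤ ⨆ i, (t i - c i) :=
  maxOther_le fun j _ => le_ciSup (Finite.bddAbove_range fun i => t i - c i) j

end MaxOther

section Payoff

variable {ι : Type*} [Fintype ι] {c : ι → ℝ} {p q : (ι → ℝ) → ι → ℝ} {t : ι → ℝ}

theorem pay_eq_of_forall_ne (k : ι) (h : ∀ i ≠ k, p t i = 0 ∧ q t i = 0) :
    Pay c p q t = p t k * t k - q t k * c k :=
  Fintype.sum_eq_single k fun i hi => by simp [(h i hi).1, (h i hi).2]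

theorem RuleI.pay_eq {istar : ι} (h : RuleI istar p q t) : Pay c p q t = t istar := by
  rw [pay_eq_of_forall_ne istar h.2.2, h.1, h.2.1]
  ring

theorem RuleII.pay_eq [LinearOrder ι] (h : RuleII c p q t) :
    Pay c p q t = ⨆ i, (t i - c i) := by
  obtain ⟨k, hmax, -, hp, hq, hzero⟩ := h
  have : Nonempty ι := ⟨k⟩
  rw [pay_eq_of_forall_ne k hzero, hp, hq, one_mul, one_mul]
  exact le_antisymm (le_ciSup (Finite.bddAbove_range fun i => t i - c i) k) (ciSup_le hmax)

end Payoff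

namespace IsFA

variable {ι : Type*} [Fintype ι] [LinearOrder ι] {tlo thi c : ι → ℝ} {istar : ι} {ν : ℝ}
  {p q : (ι → ℝ) → ι → ℝ}

theorem exists_measurableSet_ruleI (hfa : IsFA tlo thi c istar ν p q) :
    ∃ S : Set (ι → ℝ), MeasurableSet S ∧ ∀ t, InT tlo thi t →
      (t ∈ S → RuleI istar p q t) ∧ (t ∉ S → RuleII c p q t ∧ ν ≤ maxOther c istar t) := by
  obtain ⟨hlt, hgt, hI | hII⟩ := hfa
  · refine ⟨{t | maxOther c istar t ≤ ν},
      measurableSet_le (measurable_maxOther c istar) measurable_const,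
      fun t ht => ⟨fun hS => (lt_or_eq_of_le hS).elim (hlt t ht) (hI t ht), fun hS => ?_⟩⟩
    have hνlt : ν < maxOther c istar t := lt_of_not_ge hS
    exact ⟨hgt t ht hνlt, hνlt.le⟩
  · refine ⟨{t | maxOther c istar t < ν},
      measurableSet_lt (measurable_maxOther c istar) measurable_const,
      fun t ht => ⟨hlt t ht, fun hS => ?_⟩⟩
    have hνle : ν ≤ maxOther c istar t := le_of_not_gt hS
    exact ⟨(eq_or_lt_of_le hνle).elim (fun h => hII t ht h.symm) (hgt t ht), hνle⟩

theorem aestronglyMeasurable_pay (hfa : IsFA tlo thi c istar ν p q) {P : Measure (ι → ℝ)}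
    (hP : ∀ᵐ t ∂P, InT tlo thi t) : AEStronglyMeasurable (Pay c p q) P := by
  classical
  obtain ⟨S, hS, hrule⟩ := hfa.exists_measurableSet_ruleI
  have hg : Measurable (S.piecewise (fun t => t istar) fun t => ⨆ i, (t i - c i)) :=
    Measurable.piecewise hS (measurable_pi_apply istar)
      (Measurable.iSup fun i => (measurable_pi_apply i).sub_const _)
  refine hg.aestronglyMeasurable.congr (hP.mono fun t ht => ?_)
  by_cases htS : t ∈ S
  · rw [Set.piecewise_eq_of_mem _ _ _ htS, ((hrule t ht).1 htS).pay_eq]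
  · rw [Set.piecewise_eq_of_notMem _ _ _ htS, ((hrule t ht).2 htS).1.pay_eq]

theorem le_pay [Nontrivial ι] (hfa : IsFA tlo thi c istar ν p q) (hν : thi istar ≤ ν)
    {t : ι → ℝ} (ht : InT tlo thi t) : t istar ≤ Pay c p q t := by
  obtain ⟨S, -, hrule⟩ := hfa.exists_measurableSet_ruleI
  by_cases htS : t ∈ S
  · exact ((hrule t ht).1 htS).pay_eq.ge
  · obtain ⟨hII, hνle⟩ := (hrule t ht).2 htS
    calc t istar ≤ ν := (ht istar).2.trans hν
      _ ≤ maxOther c istar t := hνle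
      _ ≤ ⨆ i, (t i - c i) := maxOther_le_iSup
      _ = Pay c p q t := hII.pay_eq.symm

theorem pay_le_iSup (hfa : IsFA tlo thi c istar ν p q) (hc : ∀ i, 0 ≤ c i) {t : ι → ℝ}
    (ht : InT tlo thi t) : Pay c p q t ≤ ⨆ i, thi i := by
  obtain ⟨S, -, hrule⟩ := hfa.exists_measurableSet_ruleI
  by_cases htS : t ∈ S
  · rw [((hrule t ht).1 htS).pay_eq]
    exact (ht istar).2.trans (le_ciSup (Finite.bddAbove_range _) istar)
  · rw [((hrule t ht).2 htS).1.pay_eq]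
    exact ciSup_mono (Finite.bddAbove_range _) fun i => by linarith [(ht i).2, hc i]

theorem integral_apply_le_integral_pay [Nontrivial ι] (hfa : IsFA tlo thi c istar ν p q)
    (hν : thi istar ≤ ν) (hc : ∀ i, 0 ≤ c i) {P : Measure (ι → ℝ)} [IsFiniteMeasure P]
    (hP : ∀ᵐ t ∂P, InT tlo thi t) : ∫ t, t istar ∂P ≤ ∫ t, Pay c p q t ∂P :=
  integral_mono_ae
    (integrable_of_ae_mem_Icc (measurable_pi_apply istar).aestronglyMeasurable
      (hP.mono fun _ ht => ht istar))
    (integrable_of_ae_mem_Icc (hfa.aestronglyMeasurable_pay hP)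
      (hP.mono fun _ ht => ⟨(ht istar).1.trans (hfa.le_pay hν ht), hfa.pay_le_iSup hc ht⟩))
    (hP.mono fun _ ht => hfa.le_pay hν ht)

end IsFA

theorem inP_dirac {ι : Type*} [Fintype ι] {tlo thi mlo mhi m : ι → ℝ} (hm : InT tlo thi m)
    (hmean : ∀ i, m i ∈ Set.Icc (mlo i) (mhi i)) : InP tlo thi mlo mhi (Measure.dirac m) := by
  refine ⟨inferInstance, ?_, fun i => ?_⟩
  · rw [ae_dirac_eq]
    exact hm
  · rw [integral_dirac]
    exact hmean i

theorem stmt_11_general {ι : Type*} [Fintype ι] [Nontrivial ι] [LinearOrder ι]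
    (tlo thi mlo mhi c : ι → ℝ)
    (h1 : ∀ i, tlo i < mlo i) (h2 : ∀ i, mlo i ≤ mhi i)
    (h3 : ∀ i, mhi i < thi i) (hc : ∀ i, 0 < c i)
    (istar : ι) (hstar : ∀ i, mlo i ≤ mlo istar)
    (ν : ℝ) (hν : thi istar ≤ ν)
    (p q : (ι → ℝ) → ι → ℝ) (hfa : IsFA tlo thi c istar ν p q) :
    (∀ t, InT tlo thi t → t istar ≤ Pay c p q t) ∧
    (∀ P : Measure (ι → ℝ), InP tlo thi mlo mhi P →
      Finset.univ.sup' Finset.univ_nonempty mlo ≤ ∫ t, Pay c p q t ∂P) ∧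
    sInf {x : ℝ | ∃ P : Measure (ι → ℝ), InP tlo thi mlo mhi P ∧
        x = ∫ t, Pay c p q t ∂P} =
      Finset.univ.sup' Finset.univ_nonempty mlo := by
  have hmax : Finset.univ.sup' Finset.univ_nonempty mlo = mlo istar :=
    le_antisymm (Finset.sup'_le _ _ fun i _ => hstar i) (Finset.le_sup' mlo (Finset.mem_univ _))
  have hexp (P : Measure (ι → ℝ)) (hP : InP tlo thi mlo mhi P) :
      Finset.univ.sup' Finset.univ_nonempty mlo ≤ ∫ t, Pay c p q t ∂P := by
    obtain ⟨_, hsupp, hmean⟩ := hP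
    rw [hmax]
    exact (hmean istar).1.trans (hfa.integral_apply_le_integral_pay hν (fun i => (hc i).le) hsupp)
  have hm : InT tlo thi mlo := fun i => ⟨(h1 i).le, (h2 i).trans (h3 i).le⟩
  have hfavored : RuleI istar p q mlo := by
    refine hfa.1 mlo hm ((maxOther_le fun j _ => ?_).trans_lt
      ((h2 istar).trans_lt ((h3 istar).trans_le hν)))
    linarith [hc j, hstar j]
  refine ⟨fun t ht => hfa.le_pay hν ht, hexp, IsLeast.csInf_eq
    ⟨⟨Measure.dirac mlo, inP_dirac hm fun i => ⟨le_rfl, h2 i⟩, ?_⟩, ?_⟩⟩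
  · rw [integral_dirac, hfavored.pay_eq, hmax]
  · rintro x ⟨P, hP, rfl⟩
    exact hexp P hP

/-- Any favored-agent mechanism with favored agent `i* ∈ argmax_i μ̲_i`
and threshold `ν ≥ t̄_{i*}` achieves payoff at least `t_{i*}` in every scenario `t ∈ 𝒯`;
hence its expected payoff under every distribution in the Markov ambiguity set is at least
`max_i μ̲_i`, and its worst-case expected payoff equals this optimal value, so it is
optimal. -/
theorem stmt_11 {ι : Type*} [Fintype ι] [Nontrivial ι] [LinearOrder ι]
    (tlo thi mlo mhi c : ι → ℝ)
    (h0 : ∀ i, 0 ≤ tlo i) (h1 : ∀ i, tlo i < mlo i) (h2 : ∀ i, mlo i ≤ mhi i)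
    (h3 : ∀ i, mhi i < thi i) (hc : ∀ i, 0 < c i)
    (istar : ι) (hstar : ∀ i, mlo i ≤ mlo istar)
    (ν : ℝ) (hν : thi istar ≤ ν)
    (p q : (ι → ℝ) → ι → ℝ) (hfa : IsFA tlo thi c istar ν p q) :
    (∀ t, InT tlo thi t → t istar ≤ Pay c p q t) ∧
    (∀ P : Measure (ι → ℝ), InP tlo thi mlo mhi P →
      Finset.univ.sup' Finset.univ_nonempty mlo ≤ ∫ t, Pay c p q t ∂P) ∧
    sInf {x : ℝ | ∃ P : Measure (ι → ℝ), InP tlo thi mlo mhi P ∧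
        x = ∫ t, Pay c p q t ∂P} =
      Finset.univ.sup' Finset.univ_nonempty mlo :=
  stmt_11_general tlo thi mlo mhi c h1 h2 h3 hc istar hstar ν hν p q hfa
end

section
/- Suppose argmax_i μ̲_i = {i*} is a singleton. Then for every type profile t ∈ 𝒯 there exist a scenario t̂ ∈ 𝒯 with max_{i ≠ i*} t̂_i < t̂_{i*} and a probability distribution ℙ supported on {t, t̂} such that E_ℙ[t̃_i] = μ̲_i for all i and ℙ({t}) > 0. -/
open MeasureTheory

/-- If `argmax_i μ̲_i = {i*}` is a singleton, then for every type
profile `t ∈ 𝒯` there exist a scenario `t̂ ∈ 𝒯` with `max_{i ≠ i*} t̂_i < t̂_{i*}` and a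
probability distribution supported on `{t, t̂}` whose means are exactly `μ̲` and which
puts positive probability on `t`. -/
theorem stmt_12 {ι : Type*} [Fintype ι] [Nonempty ι]
    (tlo thi mlo mhi : ι → ℝ)
    (h1 : ∀ i, tlo i < mlo i) (h2 : ∀ i, mlo i ≤ mhi i) (h3 : ∀ i, mhi i < thi i)
    (istar : ι) (hstar : ∀ i, i ≠ istar → mlo i < mlo istar)
    (t : ι → ℝ) (ht : InT tlo thi t) :
    ∃ (that : ι → ℝ) (P : Measure (ι → ℝ)),
      InT tlo thi that ∧ (∀ i, i ≠ istar → that i < that istar) ∧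
      IsProbabilityMeasure P ∧
      P (({t, that} : Set (ι → ℝ))ᶜ) = 0 ∧
      0 < P {t} ∧
      ∀ i, ∫ s, s i ∂P = mlo i := by
  -- choose ε > 0 small enough
  set F : ℝ → ι → ℝ := fun ε i => mlo i + ε * (mlo i - t i) with hF
  have hcont : ∀ i, Filter.Tendsto (fun ε => F ε i) (nhds 0) (nhds (mlo i)) := by
    intro i
    have : Continuous fun ε : ℝ => mlo i + ε * (mlo i - t i) := by continuity
    simpa using this.tendsto 0
  have key : ∀ᶠ ε in nhdsWithin 0 (Set.Ioi 0),
      (∀ i, tlo i < F ε i ∧ F ε i < thi i) ∧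
      (∀ i, i ≠ istar → F ε i < F ε istar) := by
    apply Filter.Eventually.and
    · rw [Filter.eventually_all]
      intro i
      apply nhdsWithin_le_nhds
      exact ((Filter.Eventually.and
        ((tendsto_const_nhds.eventually_lt (hcont i) (h1 i)))
        ((hcont i).eventually_lt tendsto_const_nhds (lt_of_le_of_lt (h2 i) (h3 i))))).mono (fun x hx => hx)
    · rw [Filter.eventually_all]
      intro i
      rw [Filter.eventually_all]
      intro hne
      apply nhdsWithin_le_nhds
      exact (hcont i).eventually_lt (hcont istar) (hstar i hne)
  obtain ⟨ε, hkey, hε⟩ := (key.and self_mem_nhdsWithin).exists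
  replace hε : 0 < ε := hε
  obtain ⟨hbound, hmax⟩ := hkey
  set a : ℝ := ε / (1 + ε) with ha_def
  have h1ε : (0:ℝ) < 1 + ε := by linarith
  have ha0 : 0 < a := div_pos hε h1ε
  have ha1 : a < 1 := (div_lt_one h1ε).2 (by linarith)
  set that : ι → ℝ := F ε with hthat
  refine ⟨that, ENNReal.ofReal a • Measure.dirac t + ENNReal.ofReal (1-a) • Measure.dirac that,
    ?_, ?_, ?_, ?_, ?_, ?_⟩
  · intro i
    exact ⟨(hbound i).1.le, (hbound i).2.le⟩
  · exact hmax
  · refine ⟨?_⟩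
    rw [Measure.add_apply, Measure.smul_apply, Measure.smul_apply,
      Measure.dirac_apply_of_mem (Set.mem_univ _), Measure.dirac_apply_of_mem (Set.mem_univ _),
      smul_eq_mul, smul_eq_mul, mul_one, mul_one,
      ← ENNReal.ofReal_add ha0.le (by linarith)]
    norm_num
  · have hm : MeasurableSet (({t, that} : Set (ι → ℝ))ᶜ) := by
      exact ((MeasurableSet.singleton t).union (MeasurableSet.singleton that)).compl
    simp only [Measure.add_apply, Measure.smul_apply, smul_eq_mul]
    rw [Measure.dirac_apply' _ hm, Measure.dirac_apply' _ hm]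
    rw [Set.indicator_of_notMem (by simp), Set.indicator_of_notMem (by simp)]
    simp
  · have : (ENNReal.ofReal a • Measure.dirac t + ENNReal.ofReal (1-a) • Measure.dirac that)
        ({t} : Set (ι → ℝ)) ≥ ENNReal.ofReal a * Measure.dirac t {t} := by
      simp [Measure.add_apply]
    refine lt_of_lt_of_le ?_ this
    have hd : (Measure.dirac t) ({t} : Set (ι → ℝ)) = 1 := Measure.dirac_apply_of_mem rfl
    rw [hd, mul_one]
    exact ENNReal.ofReal_pos.2 ha0
  · intro i
    have hint : ∀ (x : ι → ℝ) (c : ENNReal), c ≠ ⊤ →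
        Integrable (fun s : ι → ℝ => s i) (c • Measure.dirac x) := by
      intro x c hc
      refine Integrable.smul_measure ?_ hc
      refine (integrable_const (x i)).congr ?_
      have hae : ∀ᵐ s ∂Measure.dirac x, s = x := by
        rw [MeasureTheory.ae_dirac_eq]; exact Filter.eventually_pure.2 rfl
      filter_upwards [hae] with s hs
      rw [hs]
    rw [integral_add_measure (hint t _ ENNReal.ofReal_ne_top) (hint that _ ENNReal.ofReal_ne_top),
      integral_smul_measure, integral_smul_measure, integral_dirac, integral_dirac,
      ENNReal.toReal_ofReal ha0.le, ENNReal.toReal_ofReal (by linarith)]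
    simp only [smul_eq_mul, hthat, hF, ha_def]
    field_simp
    ring
end

section
/- Suppose argmax_i μ̲_i = {i*}. If a feasible incentive-compatible mechanism (p, q) is optimal for the Markov ambiguity set, then p_{i*}(t) = 1 and q_{i*}(t) = 0 for every type profile t with max_{i ≠ i*}(t_i − c_i) < t̄_{i*}. -/
open MeasureTheory

section Aux

lemma integrable_dirac' {α : Type*} [MeasurableSpace α] [MeasurableSingletonClass α]
    (f : α → ℝ) (x : α) : Integrable f (Measure.dirac x) :=
  (integrable_const (f x)).congr
    (by rw [Filter.EventuallyEq, ae_dirac_eq]; exact Filter.eventually_pure.2 rfl)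

lemma integral_two_point {α : Type*} [MeasurableSpace α] [MeasurableSingletonClass α]
    (x y : α) {ε : ℝ} (hε0 : 0 ≤ ε) (hε1 : ε ≤ 1) (f : α → ℝ) :
    ∫ z, f z ∂(ENNReal.ofReal ε • Measure.dirac x + ENNReal.ofReal (1 - ε) • Measure.dirac y)
      = ε * f x + (1 - ε) * f y := by
  rw [integral_add_measure ((integrable_dirac' f x).smul_measure ENNReal.ofReal_ne_top)
      ((integrable_dirac' f y).smul_measure ENNReal.ofReal_ne_top),
    integral_smul_measure, integral_smul_measure, integral_dirac, integral_dirac,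
    ENNReal.toReal_ofReal hε0, ENNReal.toReal_ofReal (by linarith)]
  simp [smul_eq_mul]

lemma measurableSet_InT {ι : Type*} [Fintype ι] (tlo thi : ι → ℝ) :
    MeasurableSet {t : ι → ℝ | InT tlo thi t} := by
  have h : {t : ι → ℝ | InT tlo thi t}
      = ⋂ i, (fun t : ι → ℝ => t i) ⁻¹' Set.Icc (tlo i) (thi i) := by
    ext t; simp [InT, Set.mem_iInter]
  rw [h]
  exact MeasurableSet.iInter fun i => (measurable_pi_apply i) measurableSet_Icc

lemma measurable_pay {ι : Type*} [Fintype ι] (c : ι → ℝ) (p q : (ι → ℝ) → ι → ℝ)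
    (hpm : ∀ i, Measurable fun t => p t i) (hqm : ∀ i, Measurable fun t => q t i) :
    Measurable (Pay c p q) := by
  show Measurable fun t => ∑ i, (p t i * t i - q t i * c i)
  exact Finset.measurable_sum _ fun i _ =>
    ((hpm i).mul (measurable_pi_apply i)).sub ((hqm i).mul_const (c i))

lemma pay_abs_bound {ι : Type*} [Fintype ι] (tlo thi c : ι → ℝ)
    (h0 : ∀ i, 0 ≤ tlo i) (hc : ∀ i, 0 < c i) (p q : (ι → ℝ) → ι → ℝ)
    (hfeas : Feas tlo thi p q) :
    ∀ t, InT tlo thi t → |Pay c p q t| ≤ ∑ i, (thi i + c i) := by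
  intro t ht
  have hf := hfeas t ht
  calc |Pay c p q t| ≤ ∑ i, |p t i * t i - q t i * c i| := Finset.abs_sum_le_sum_abs _ _
    _ ≤ ∑ i, (thi i + c i) := by
        refine Finset.sum_le_sum fun i _ => ?_
        obtain ⟨hq0, hqp, hp1⟩ := hf.1 i
        have hlo := (ht i).1
        have hhi := (ht i).2
        have hti0 : 0 ≤ t i := le_trans (h0 i) hlo
        rw [abs_le]
        constructor <;> nlinarith [hc i, h0 i]

lemma pay_integrable {ι : Type*} [Fintype ι] (tlo thi mlo mhi c : ι → ℝ)
    (h0 : ∀ i, 0 ≤ tlo i) (hc : ∀ i, 0 < c i) (p q : (ι → ℝ) → ι → ℝ)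
    (hpm : ∀ i, Measurable fun t => p t i) (hqm : ∀ i, Measurable fun t => q t i)
    (hfeas : Feas tlo thi p q) (P : Measure (ι → ℝ)) (hP : InP tlo thi mlo mhi P) :
    Integrable (Pay c p q) P := by
  haveI := hP.1
  refine Integrable.mono' (integrable_const (∑ i, (thi i + c i)))
    (measurable_pay c p q hpm hqm).aestronglyMeasurable ?_
  filter_upwards [hP.2.1] with t ht
  exact pay_abs_bound tlo thi c h0 hc p q hfeas t ht

lemma S_bddBelow {ι : Type*} [Fintype ι] (tlo thi mlo mhi c : ι → ℝ)
    (h0 : ∀ i, 0 ≤ tlo i) (hc : ∀ i, 0 < c i) (p q : (ι → ℝ) → ι → ℝ)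
    (hpm : ∀ i, Measurable fun t => p t i) (hqm : ∀ i, Measurable fun t => q t i)
    (hfeas : Feas tlo thi p q) :
    BddBelow {x : ℝ | ∃ P : Measure (ι → ℝ), InP tlo thi mlo mhi P ∧
        x = ∫ t, Pay c p q t ∂P} := by
  refine ⟨-∑ i, (thi i + c i), ?_⟩
  rintro x ⟨P, hP, rfl⟩
  haveI := hP.1
  have hint := pay_integrable tlo thi mlo mhi c h0 hc p q hpm hqm hfeas P hP
  have h1 : ∫ _t, (-∑ i, (thi i + c i) : ℝ) ∂P ≤ ∫ t, Pay c p q t ∂P := by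
    refine integral_mono_ae (integrable_const _) hint ?_
    filter_upwards [hP.2.1] with t ht
    have := pay_abs_bound tlo thi c h0 hc p q hfeas t ht
    have := abs_le.1 this
    linarith [this.1]
  simpa using h1

lemma scenariowise {ι : Type*} [Fintype ι] [Nonempty ι] [DecidableEq ι]
    (tlo thi mlo mhi c : ι → ℝ)
    (h0 : ∀ i, 0 ≤ tlo i) (h1 : ∀ i, tlo i < mlo i) (h2 : ∀ i, mlo i ≤ mhi i)
    (h3 : ∀ i, mhi i < thi i) (hc : ∀ i, 0 < c i)
    (istar : ι) (hstar : ∀ i, i ≠ istar → mlo i < mlo istar)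
    (p q : (ι → ℝ) → ι → ℝ)
    (hpm : ∀ i, Measurable fun t => p t i) (hqm : ∀ i, Measurable fun t => q t i)
    (hfeas : Feas tlo thi p q)
    (hopt : sInf {x : ℝ | ∃ P : Measure (ι → ℝ), InP tlo thi mlo mhi P ∧
        x = ∫ t, Pay c p q t ∂P} = mlo istar) :
    ∀ t0, InT tlo thi t0 → t0 istar ≤ Pay c p q t0 := by
  intro t0 ht0
  have hd : ∀ i, 0 < thi i - tlo i := fun i => by linarith [h1 i, h2 i, h3 i]
  have hthi0 : ∀ i, 0 < thi i := fun i => by linarith [h0 i, h1 i, h2 i, h3 i]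
  set F : ι → ℝ := fun i => min ((mlo i - tlo i) / (thi i - tlo i))
      (min ((thi i - mlo i) / (thi i - tlo i))
        (if i = istar then 1 else (mlo istar - mlo i) / (thi istar + 1))) with hF
  have hne : (Finset.univ : Finset ι).Nonempty := Finset.univ_nonempty
  set ε : ℝ := min (1/2) (Finset.univ.inf' hne F) with hεdef
  have hFpos : ∀ i, 0 < F i := by
    intro i
    refine lt_min (div_pos (by linarith [h1 i]) (hd i))
      (lt_min (div_pos (by linarith [h2 i, h3 i]) (hd i)) ?_)
    by_cases h : i = istar
    · simp [h]
    · rw [if_neg h]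
      exact div_pos (by linarith [hstar i h]) (by linarith [hthi0 istar])
  have hε0 : 0 < ε :=
    lt_min (by norm_num) ((Finset.lt_inf'_iff hne).2 fun i _ => hFpos i)
  have hε1 : ε < 1 := lt_of_le_of_lt (min_le_left _ _) (by norm_num)
  have hεF : ∀ i, ε ≤ F i := fun i =>
    le_trans (min_le_right _ _) (Finset.inf'_le F (Finset.mem_univ i))
  have hεa : ∀ i, ε * (thi i - tlo i) ≤ mlo i - tlo i := by
    intro i
    have := le_trans (hεF i) (min_le_left _ _)
    rwa [le_div_iff₀ (hd i)] at this
  have hεb : ∀ i, ε * (thi i - tlo i) ≤ thi i - mlo i := by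
    intro i
    have := le_trans (hεF i) (le_trans (min_le_right _ _) (min_le_left _ _))
    rwa [le_div_iff₀ (hd i)] at this
  have hεc : ∀ i, i ≠ istar → ε * (thi istar + 1) ≤ mlo istar - mlo i := by
    intro i hi
    have h := le_trans (hεF i) (le_trans (min_le_right _ _) (min_le_right _ _))
    rw [if_neg hi, le_div_iff₀ (by linarith [hthi0 istar])] at h
    exact h
  have h1ε : 0 < 1 - ε := by linarith
  set a : ι → ℝ := fun i => (mlo i - ε * t0 i) / (1 - ε) with hadef
  have haval : ∀ i, (1 - ε) * a i = mlo i - ε * t0 i := by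
    intro i
    rw [hadef]
    field_simp
  have haT : InT tlo thi a := by
    intro i
    have hlo := (ht0 i).1
    have hhi := (ht0 i).2
    constructor
    · rw [hadef, le_div_iff₀ h1ε]
      have h5 : ε * (t0 i - tlo i) ≤ ε * (thi i - tlo i) :=
        mul_le_mul_of_nonneg_left (by linarith) hε0.le
      nlinarith [hεa i]
    · rw [hadef, div_le_iff₀ h1ε]
      have h5 : ε * (thi i - t0 i) ≤ ε * (thi i - tlo i) :=
        mul_le_mul_of_nonneg_left (by linarith) hε0.le
      nlinarith [hεb i]
  have ha_le : ∀ i, a i ≤ a istar := by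
    intro i
    by_cases hi : i = istar
    · rw [hi]
    · rw [hadef, div_le_div_iff_of_pos_right h1ε]
      have e1 : ε * t0 istar ≤ ε * thi istar :=
        mul_le_mul_of_nonneg_left (ht0 istar).2 hε0.le
      have e2 : 0 ≤ ε * t0 i :=
        mul_nonneg hε0.le (le_trans (h0 i) (ht0 i).1)
      nlinarith [hεc i hi]
  set P : Measure (ι → ℝ) :=
    ENNReal.ofReal ε • Measure.dirac t0 + ENNReal.ofReal (1 - ε) • Measure.dirac a with hP
  have hPP : IsProbabilityMeasure P := by
    constructor
    rw [hP]
    simp only [Measure.add_apply, Measure.smul_apply, smul_eq_mul, measure_univ, mul_one]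
    rw [← ENNReal.ofReal_add hε0.le (by linarith)]
    norm_num
  have hae : ∀ᵐ t ∂P, InT tlo thi t := by
    rw [hP, ae_add_measure_iff]
    constructor <;> refine Measure.ae_smul_measure ?_ _
    · exact (ae_dirac_iff (measurableSet_InT tlo thi)).2 ht0
    · exact (ae_dirac_iff (measurableSet_InT tlo thi)).2 haT
  have hmean : ∀ i, ∫ t, t i ∂P ∈ Set.Icc (mlo i) (mhi i) := by
    intro i
    have hval : ∫ t, t i ∂P = mlo i := by
      rw [hP, integral_two_point t0 a hε0.le hε1.le (fun z => z i)]
      have := haval i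
      linarith
    rw [hval]
    exact ⟨le_refl _, h2 i⟩
  have hmem : (∫ t, Pay c p q t ∂P) ∈ {x : ℝ | ∃ P : Measure (ι → ℝ),
      InP tlo thi mlo mhi P ∧ x = ∫ t, Pay c p q t ∂P} :=
    ⟨P, ⟨hPP, hae, hmean⟩, rfl⟩
  have hle : mlo istar ≤ ∫ t, Pay c p q t ∂P := by
    rw [← hopt]
    exact csInf_le (S_bddBelow tlo thi mlo mhi c h0 hc p q hpm hqm hfeas) hmem
  have hval : ∫ t, Pay c p q t ∂P = ε * Pay c p q t0 + (1 - ε) * Pay c p q a := by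
    rw [hP]
    exact integral_two_point t0 a hε0.le hε1.le (Pay c p q)
  have hfa := hfeas a haT
  have ha0 : 0 ≤ a istar := le_trans (h0 istar) (haT istar).1
  have hPa : Pay c p q a ≤ a istar := by
    have hs1 : Pay c p q a ≤ ∑ i, p a i * a istar := by
      show ∑ i, (p a i * a i - q a i * c i) ≤ ∑ i, p a i * a istar
      refine Finset.sum_le_sum fun i _ => ?_
      obtain ⟨hq0, hqp, hp1⟩ := hfa.1 i
      have hai := ha_le i
      nlinarith [hc i, mul_nonneg hq0 (hc i).le, le_trans hq0 hqp]
    have hs2 : ∑ i, p a i * a istar ≤ a istar := by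
      rw [← Finset.sum_mul]
      nlinarith [hfa.2, ha0]
    linarith
  have hkey : mlo istar ≤ ε * Pay c p q t0 + (mlo istar - ε * t0 istar) := by
    have := haval istar
    nlinarith [mul_le_mul_of_nonneg_left hPa h1ε.le]
  have : ε * t0 istar ≤ ε * Pay c p q t0 := by linarith
  exact le_of_mul_le_mul_left this hε0

end Aux

theorem stmt_14 {ι : Type*} [Fintype ι] [Nonempty ι] [DecidableEq ι]
    (tlo thi mlo mhi c : ι → ℝ)
    (h0 : ∀ i, 0 ≤ tlo i) (h1 : ∀ i, tlo i < mlo i) (h2 : ∀ i, mlo i ≤ mhi i)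
    (h3 : ∀ i, mhi i < thi i) (hc : ∀ i, 0 < c i)
    (istar : ι) (hstar : ∀ i, i ≠ istar → mlo i < mlo istar)
    (p q : (ι → ℝ) → ι → ℝ)
    (hpm : ∀ i, Measurable fun t => p t i) (hqm : ∀ i, Measurable fun t => q t i)
    (hfeas : Feas tlo thi p q) (hic : IC tlo thi p q)
    (hopt : sInf {x : ℝ | ∃ P : Measure (ι → ℝ), InP tlo thi mlo mhi P ∧
        x = ∫ t, Pay c p q t ∂P} = mlo istar) :
    ∀ t, InT tlo thi t → (∀ i, i ≠ istar → t i - c i < thi istar) →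
      p t istar = 1 ∧ q t istar = 0 := by
  intro t ht htc
  have hsw := scenariowise tlo thi mlo mhi c h0 h1 h2 h3 hc istar hstar p q hpm hqm hfeas hopt
  set M : ℝ := thi istar with hM
  have htloM : ∀ k, tlo k < M := by
    intro k
    by_cases hk : k = istar
    · subst hk; linarith [h1 k, h2 k, h3 k]
    · linarith [h1 k, hstar k hk, h2 istar, h3 istar]
  have hM0 : 0 < M := lt_of_le_of_lt (h0 istar) (htloM istar)
  set v : Finset ι → ι → ℝ :=
    fun S k => if k = istar then M else if k ∈ S then t k else tlo k with hv
  have hvT : ∀ S, InT tlo thi (v S) := by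
    intro S k
    by_cases hk : k = istar
    · subst hk
      simp only [hv, if_pos rfl]
      exact ⟨(htloM k).le, le_refl _⟩
    · by_cases hkS : k ∈ S
      · simp only [hv, if_neg hk, if_pos hkS]
        exact ht k
      · simp only [hv, if_neg hk, if_neg hkS]
        exact ⟨le_refl _, by linarith [h1 k, h2 k, h3 k]⟩
  have key : ∀ S : Finset ι, istar ∉ S →
      p (v S) istar = 1 ∧ q (v S) istar = 0 ∧ ∀ k, k ≠ istar → p (v S) k = 0 := by
    intro S
    induction S using Finset.strongInductionOn with
    | _ S IH =>
      intro hS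
      have hfS := hfeas (v S) (hvT S)
      -- step 1: p = q on raised coordinates
      have hpq : ∀ j ∈ S, p (v S) j = q (v S) j := by
        intro j hj
        have hjst : j ≠ istar := fun h => hS (h ▸ hj)
        have hw : v S = Function.update (v (S.erase j)) j (t j) := by
          funext k
          by_cases hk : k = j
          · subst hk
            rw [Function.update_self]
            simp [hv, hjst, hj]
          · rw [Function.update_of_ne hk]
            by_cases hki : k = istar
            · simp [hv, hki]
            · simp [hv, hki, Finset.mem_erase, hk]
        have h0' := (IH (S.erase j) (Finset.erase_ssubset hj)
          (fun h => hS (Finset.mem_of_mem_erase h))).2.2 j hjst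
        have hicj := hic j (v (S.erase j)) (hvT _) (t j) ⟨(ht j).1, (ht j).2⟩
        rw [← hw, h0'] at hicj
        have hfj := hfS.1 j
        linarith [hfj.2.1]
      have hswS := hsw (v S) (hvT S)
      have hvist : v S istar = M := by simp [hv]
      rw [hvist] at hswS
      -- slack decomposition
      set r : ι → ℝ := fun k => if k = istar then q (v S) istar * c istar
        else if k ∈ S then p (v S) k * (M - (t k - c k))
        else p (v S) k * (M - tlo k) + q (v S) k * c k with hr
      have hterm : ∀ k, p (v S) k * (v S k) - q (v S) k * c k = p (v S) k * M - r k := by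
        intro k
        by_cases hk : k = istar
        · subst hk
          simp only [hr, hv, if_pos rfl]
        · by_cases hkS : k ∈ S
          · have hpqk := hpq k hkS
            simp only [hr, hv, if_neg hk, if_pos hkS]
            rw [hpqk]
            ring
          · simp only [hr, hv, if_neg hk, if_neg hkS]
            ring
      have hsum : Pay c p q (v S) = (∑ k, p (v S) k) * M - ∑ k, r k := by
        show ∑ k, (p (v S) k * (v S k) - q (v S) k * c k) = _
        rw [Finset.sum_mul, ← Finset.sum_sub_distrib]
        exact Finset.sum_congr rfl fun k _ => hterm k
      have hr0 : ∀ k, 0 ≤ r k := by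
        intro k
        by_cases hk : k = istar
        · subst hk
          simp only [hr, if_pos rfl]
          exact mul_nonneg (hfS.1 k).1 (hc k).le
        · by_cases hkS : k ∈ S
          · simp only [hr, if_neg hk, if_pos hkS]
            exact mul_nonneg (le_trans (hfS.1 k).1 (hfS.1 k).2.1) (by linarith [htc k hk])
          · simp only [hr, if_neg hk, if_neg hkS]
            have := htloM k
            have hp0 : 0 ≤ p (v S) k := le_trans (hfS.1 k).1 (hfS.1 k).2.1
            have := mul_nonneg (hfS.1 k).1 (hc k).le
            nlinarith
      rw [hsum] at hswS
      have hsumP := hfS.2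
      have hrsum0 : ∑ k, r k = 0 := by
        have h5 : (∑ k, p (v S) k) * M ≤ M := by nlinarith
        have h6 : 0 ≤ ∑ k, r k := Finset.sum_nonneg fun k _ => hr0 k
        linarith
      have hrzero : ∀ k, r k = 0 := fun k =>
        (Finset.sum_eq_zero_iff_of_nonneg fun k _ => hr0 k).1 hrsum0 k (Finset.mem_univ k)
      -- extract conclusions
      have hq0 : q (v S) istar = 0 := by
        have := hrzero istar
        simp only [hr, if_pos rfl] at this
        rcases mul_eq_zero.1 this with h | h
        · exact h
        · exact absurd h (hc istar).ne'
      have hpk0 : ∀ k, k ≠ istar → p (v S) k = 0 := by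
        intro k hk
        have hrk := hrzero k
        by_cases hkS : k ∈ S
        · simp only [hr, if_neg hk, if_pos hkS] at hrk
          rcases mul_eq_zero.1 hrk with h | h
          · exact h
          · exfalso; linarith [htc k hk]
        · simp only [hr, if_neg hk, if_neg hkS] at hrk
          have hp0 : 0 ≤ p (v S) k := le_trans (hfS.1 k).1 (hfS.1 k).2.1
          have hq0' := mul_nonneg (hfS.1 k).1 (hc k).le
          have hprod : 0 ≤ p (v S) k * (M - tlo k) :=
            mul_nonneg hp0 (by linarith [htloM k])
          have h5 : p (v S) k * (M - tlo k) = 0 := by linarith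
          rcases mul_eq_zero.1 h5 with h | h
          · exact h
          · exfalso; linarith [htloM k]
      have hsum1 : ∑ k, p (v S) k = p (v S) istar := by
        rw [← Finset.add_sum_erase _ _ (Finset.mem_univ istar)]
        rw [Finset.sum_eq_zero fun k hk => hpk0 k (Finset.ne_of_mem_erase hk), add_zero]
      have hp1 : p (v S) istar = 1 := by
        have h5 : 1 ≤ ∑ k, p (v S) k := by nlinarith [hrsum0, hswS]
        rw [hsum1] at h5 hsumP
        linarith
      exact ⟨hp1, hq0, hpk0⟩
  -- apply at full set
  have hSfull : istar ∉ Finset.univ.erase istar := fun h => (Finset.mem_erase.1 h).1 rfl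
  obtain ⟨hp1', hq1', _⟩ := key (Finset.univ.erase istar) hSfull
  have hvfull : v (Finset.univ.erase istar) = Function.update t istar M := by
    funext k
    by_cases hk : k = istar
    · subst hk
      rw [Function.update_self]
      simp [hv]
    · rw [Function.update_of_ne hk]
      simp [hv, hk, Finset.mem_erase]
  have hicst := hic istar t ht M ⟨(htloM istar).le, le_refl M⟩
  rw [← hvfull, hp1', hq1'] at hicst
  have hft := hfeas t ht
  have hpt1 : p t istar = 1 := le_antisymm (hft.1 istar).2.2 (by linarith)
  refine ⟨hpt1, ?_⟩
  -- q t istar = 0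
  have hptk : ∀ k, k ≠ istar → p t k = 0 := by
    intro k hk
    have hsum1 : ∑ i, p t i = p t istar + ∑ i ∈ Finset.univ.erase istar, p t i :=
      (Finset.add_sum_erase _ _ (Finset.mem_univ istar)).symm
    have hnn : ∀ i ∈ Finset.univ.erase istar, 0 ≤ p t i :=
      fun i _ => le_trans (hft.1 i).1 (hft.1 i).2.1
    have hle0 : ∑ i ∈ Finset.univ.erase istar, p t i ≤ 0 := by
      rw [hsum1, hpt1] at hft
      linarith [hft.2]
    have heq0 : ∑ i ∈ Finset.univ.erase istar, p t i = 0 :=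
      le_antisymm hle0 (Finset.sum_nonneg hnn)
    exact (Finset.sum_eq_zero_iff_of_nonneg hnn).1 heq0 k
      (Finset.mem_erase.2 ⟨hk, Finset.mem_univ k⟩)
  have hqtk : ∀ k, k ≠ istar → q t k = 0 := by
    intro k hk
    have := hptk k hk
    have hf := hft.1 k
    linarith [hf.1, hf.2.1]
  have hswt := hsw t ht
  have hexp : Pay c p q t = t istar - q t istar * c istar := by
    show ∑ i, (p t i * t i - q t i * c i) = _
    rw [← Finset.add_sum_erase _ _ (Finset.mem_univ istar),
      Finset.sum_eq_zero (fun k hk => by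
        rw [hptk k (Finset.ne_of_mem_erase hk), hqtk k (Finset.ne_of_mem_erase hk)]; ring),
      add_zero, hpt1]
    ring
  rw [hexp] at hswt
  have hq0' : 0 ≤ q t istar := (hft.1 istar).1
  nlinarith [hc istar]
end

section
/- In the two-agent Markov example with 𝒯_1 = [1,6], 𝒯_2 = [0,10], mean bounds [4,5] and [3,7], and c_1 = c_2 = 2: for any favored-agent mechanism with favored agent 1 and threshold ν ∈ [1,6), the two-point distribution putting probability 1/2 on (6, 6.5 + ν/4) and 1/2 on (2, 0) belongs to the Markov ambiguity set, and the mechanism's expected payoff under it equals 3.25 + ν/8, which is strictly less than the optimal value 4. Hence any such mechanism is strictly suboptimal. -/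
/-! With threshold `ν < 6` the mechanism is fooled by a two-point distribution. At `(6, 6.5 + ν/4)`
agent 2 clears the threshold, so the mechanism inspects and earns `t₂ - c₂ = 4.5 + ν/4`; at `(2, 0)`
it hands the good to agent 1 and earns `t₁ = 2`. With equal weights the means are `4` and
`3.25 + ν/8`, inside the Markov bounds, and the expected payoff `3.25 + ν/8` is below `4`. The
worst-case payoff is an infimum over the ambiguity set, so this one member already pushes it
below the optimal value `4`. -/

open MeasureTheory
open scoped ENNReal

section TwoPointMeasure

variable {α : Type*} [MeasurableSpace α]

theorem isProbabilityMeasure_smul_dirac_add_smul_dirac {p q : ℝ≥0∞} (h : p + q = 1) (a b : α) :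
    IsProbabilityMeasure (p • Measure.dirac a + q • Measure.dirac b) :=
  ⟨by simp [h]⟩

variable [MeasurableSingletonClass α]

theorem ae_smul_dirac_add_smul_dirac {P : α → Prop} (p q : ℝ≥0∞) {a b : α} (ha : P a)
    (hb : P b) : ∀ᵐ x ∂(p • Measure.dirac a + q • Measure.dirac b), P x :=
  ae_add_measure_iff.2 ⟨Measure.ae_smul_measure (by rwa [ae_dirac_eq]) p,
    Measure.ae_smul_measure (by rwa [ae_dirac_eq]) q⟩

theorem integral_smul_dirac_add_smul_dirac {E : Type*} [NormedAddCommGroup E] [NormedSpace ℝ E]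
    [CompleteSpace E] {p q : ℝ≥0∞} (hp : p ≠ ∞) (hq : q ≠ ∞) (a b : α) (f : α → E) :
    ∫ x, f x ∂(p • Measure.dirac a + q • Measure.dirac b) = p.toReal • f a + q.toReal • f b := by
  rw [integral_add_measure ((integrable_dirac (by simp)).smul_measure hp)
    ((integrable_dirac (by simp)).smul_measure hq), integral_smul_measure, integral_smul_measure,
    integral_dirac, integral_dirac]

theorem integral_half_dirac_add_half_dirac (a b : α) (f : α → ℝ) :
    ∫ x, f x ∂((1 / 2 : ℝ≥0∞) • Measure.dirac a + (1 / 2 : ℝ≥0∞) • Measure.dirac b) =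
      (f a + f b) / 2 := by
  rw [integral_smul_dirac_add_smul_dirac (by simp) (by simp)]
  simp only [ENNReal.toReal_div, ENNReal.toReal_one, ENNReal.toReal_ofNat, smul_eq_mul]
  ring

end TwoPointMeasure

/-- The hypothesis `0 < c` is needed because `sInf s = 0` when `s` is not bounded below. -/
theorem Real.sInf_lt_of_mem_of_lt {s : Set ℝ} {x c : ℝ} (hx : x ∈ s) (hxc : x < c) (hc : 0 < c) :
    sInf s < c := by
  by_cases hs : BddBelow s
  · exact (csInf_le hs hx).trans_lt hxc
  · rwa [Real.sInf_of_not_bddBelow hs]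

/-- In the two-agent Markov example with `𝒯_1 = [1,6]`, `𝒯_2 = [0,10]`,
mean bounds `[4,5]` and `[3,7]`, and `c_1 = c_2 = 2`: for any favored-agent mechanism with
favored agent `1` and threshold `ν ∈ [1,6)` (whose payoff is `t_1` when `t_2 - 2 < ν` and
`max (t_1 - 2) (t_2 - 2)` when `t_2 - 2 > ν`), the two-point distribution putting
probability `1/2` on `(6, 6.5 + ν/4)` and `1/2` on `(2, 0)` belongs to the Markov
ambiguity set, the mechanism's expected payoff under it equals `3.25 + ν/8 < 4`, and hence
its worst-case expected payoff is strictly below the optimal value `4`. -/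
theorem stmt_15 (ν : ℝ) (hν1 : 1 ≤ ν) (hν2 : ν < 6)
    (pay : ℝ → ℝ → ℝ)
    (hpayI : ∀ t1 ∈ Set.Icc (1:ℝ) 6, ∀ t2 ∈ Set.Icc (0:ℝ) 10,
      t2 - 2 < ν → pay t1 t2 = t1)
    (hpayII : ∀ t1 ∈ Set.Icc (1:ℝ) 6, ∀ t2 ∈ Set.Icc (0:ℝ) 10,
      ν < t2 - 2 → pay t1 t2 = max (t1 - 2) (t2 - 2))
    (P : Measure (ℝ × ℝ))
    (hP : P = ((1:ENNReal)/2) • Measure.dirac ((6:ℝ), 6.5 + ν/4)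
      + ((1:ENNReal)/2) • Measure.dirac ((2:ℝ), (0:ℝ))) :
    IsProbabilityMeasure P ∧
    (∀ᵐ t ∂P, t.1 ∈ Set.Icc (1:ℝ) 6 ∧ t.2 ∈ Set.Icc (0:ℝ) 10) ∧
    (∫ t : ℝ × ℝ, t.1 ∂P) ∈ Set.Icc (4:ℝ) 5 ∧
    (∫ t : ℝ × ℝ, t.2 ∂P) ∈ Set.Icc (3:ℝ) 7 ∧
    (∫ t : ℝ × ℝ, pay t.1 t.2 ∂P) = 3.25 + ν/8 ∧
    (3.25 + ν/8 : ℝ) < 4 ∧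
    sInf {x : ℝ | ∃ Q : Measure (ℝ × ℝ), IsProbabilityMeasure Q ∧
        (∀ᵐ t ∂Q, t.1 ∈ Set.Icc (1:ℝ) 6 ∧ t.2 ∈ Set.Icc (0:ℝ) 10) ∧
        (∫ t : ℝ × ℝ, t.1 ∂Q) ∈ Set.Icc (4:ℝ) 5 ∧
        (∫ t : ℝ × ℝ, t.2 ∂Q) ∈ Set.Icc (3:ℝ) 7 ∧
        x = ∫ t : ℝ × ℝ, pay t.1 t.2 ∂Q} < 4 := by
  have hhigh : (6.5 + ν / 4 : ℝ) ∈ Set.Icc (0:ℝ) 10 := ⟨by linarith, by linarith⟩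
  have hprob : IsProbabilityMeasure P :=
    hP ▸ isProbabilityMeasure_smul_dirac_add_smul_dirac (ENNReal.add_halves 1) _ _
  have hsupp : ∀ᵐ t ∂P, t.1 ∈ Set.Icc (1:ℝ) 6 ∧ t.2 ∈ Set.Icc (0:ℝ) 10 :=
    hP ▸ ae_smul_dirac_add_smul_dirac _ _ ⟨by norm_num, hhigh⟩ (by norm_num)
  have hmean₁ : (∫ t : ℝ × ℝ, t.1 ∂P) ∈ Set.Icc (4:ℝ) 5 := by
    rw [hP, integral_half_dirac_add_half_dirac]
    norm_num
  have hmean₂ : (∫ t : ℝ × ℝ, t.2 ∂P) ∈ Set.Icc (3:ℝ) 7 := by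
    rw [hP, integral_half_dirac_add_half_dirac]
    constructor <;> linarith
  have hpay_high : pay 6 (6.5 + ν / 4) = 4.5 + ν / 4 := by
    rw [hpayII 6 (by norm_num) _ hhigh (by linarith), max_eq_right (by linarith)]
    ring
  have hpay_low : pay 2 0 = 2 := hpayI 2 (by norm_num) 0 (by norm_num) (by linarith)
  have hvalue : ∫ t : ℝ × ℝ, pay t.1 t.2 ∂P = 3.25 + ν / 8 := by
    rw [hP, integral_half_dirac_add_half_dirac, hpay_high, hpay_low]
    ring
  exact ⟨hprob, hsupp, hmean₁, hmean₂, hvalue, by linarith,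
    Real.sInf_lt_of_mem_of_lt ⟨P, hprob, hsupp, hmean₁, hmean₂, hvalue.symm⟩
      (by linarith) four_pos⟩
end

section
/- Suppose argmax_i μ̲_i = {i*}. For any type profile t ∈ 𝒯 and any target mean μ_{i*} ∈ [μ̲_{i*}, μ̄_{i*}], there exist a scenario t̂ ∈ 𝒯 with max_{i ≠ i*} t̂_i < μ̲_{i*} and a product probability distribution ℙ on 𝒯 with independent coordinates such that each coordinate t̃_i is supported on {t_i, t̂_i}, E_ℙ[t̃_{i*}] = μ_{i*}, E_ℙ[t̃_i] ∈ [μ̲_i, μ̄_i] for all i, and ℙ({t}) > 0. -/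
open MeasureTheory ProbabilityTheory

/-- The coordinates `t̃_1, …, t̃_I` are mutually independent under `P`. -/
def IndepCoords {ι : Type*} [Fintype ι] (P : MeasureTheory.Measure (ι → ℝ)) : Prop :=
  ProbabilityTheory.iIndepFun (fun i (t : ι → ℝ) => t i) P

section bernoulli

variable {X : Type*} [MeasurableSpace X] [MeasurableSingletonClass X] {x y : X}
  {p : unitInterval}

lemma ae_mem_bernoulliMeasure : ∀ᵐ z ∂Ber(x, y, p), z ∈ ({x, y} : Set X) :=
  ae_iff.2 <| bernoulliMeasure_apply_of_notMem_of_notMem p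
    ((Set.toFinite _).measurableSet.compl) (by simp) (by simp)

lemma bernoulliMeasure_singleton_pos (hp : 0 < p) : 0 < Ber(x, y, p) {x} := by
  calc (0 : ENNReal) < unitInterval.toNNReal p := ENNReal.coe_pos.2 (NNReal.coe_pos.1 hp)
    _ ≤ Ber(x, y, p) {x} := by simp [bernoulliMeasure_def]

end bernoulli

lemma exists_mul_add_one_sub_mul_eq {a b m : ℝ} (hm : m ∈ Set.uIcc a b) (hmb : m ≠ b) :
    ∃ α, 0 < α ∧ α ≤ 1 ∧ α * a + (1 - α) * b = m := by
  rw [Set.uIcc_comm, ← segment_eq_uIcc, segment_eq_image] at hm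
  obtain ⟨α, ⟨hα0, hα1⟩, rfl⟩ := hm
  refine ⟨α, hα0.lt_of_ne ?_, hα1, by simp only [smul_eq_mul]; ring⟩
  rintro rfl
  simp at hmb

lemma exists_bernoulliMeasure_integral_eq {a b m : ℝ} (hm : m ∈ Set.uIcc a b) (hmb : m ≠ b) :
    ∃ p : unitInterval, 0 < p ∧ ∫ z, z ∂Ber(a, b, p) = m := by
  obtain ⟨α, hα0, hα1, hα⟩ := exists_mul_add_one_sub_mul_eq hm hmb
  exact ⟨⟨α, hα0.le, hα1⟩, hα0, by simpa [integral_bernoulliMeasure] using hα⟩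

lemma exists_bernoulliMeasure_integral_eq_of_lt {lo hi m u x : ℝ} (hlo : lo < m)
    (hhi : m < hi) (hu : m < u) :
    ∃ b ∈ Set.Icc lo hi, b < u ∧ ∃ p : unitInterval, 0 < p ∧ ∫ z, z ∂Ber(x, b, p) = m := by
  rcases le_or_gt m x with hmx | hxm
  · exact ⟨lo, ⟨le_rfl, hlo.le.trans hhi.le⟩, hlo.trans hu,
      exists_bernoulliMeasure_integral_eq (Set.mem_uIcc.2 (Or.inr ⟨hlo.le, hmx⟩)) hlo.ne'⟩
  · set b := min hi ((m + u) / 2)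
    have hmb : m < b := lt_min hhi (by linarith)
    exact ⟨b, ⟨hlo.le.trans hmb.le, min_le_left _ _⟩,
      (min_le_right _ _).trans_lt (by linarith),
      exists_bernoulliMeasure_integral_eq (Set.mem_uIcc.2 (Or.inl ⟨hxm.le, hmb.le⟩)) hmb.ne⟩

theorem stmt_18_general {ι : Type*} [Fintype ι]
    (tlo thi mlo mhi : ι → ℝ)
    (h1 : ∀ i, tlo i < mlo i) (h2 : ∀ i, mlo i ≤ mhi i) (h3 : ∀ i, mhi i < thi i)
    (istar : ι) (hstar : ∀ i, i ≠ istar → mlo i < mlo istar)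
    (t : ι → ℝ) (ht : InT tlo thi t)
    (μstar : ℝ) (hμ : μstar ∈ Set.Icc (mlo istar) (mhi istar)) :
    ∃ (that : ι → ℝ) (P : Measure (ι → ℝ)),
      InT tlo thi that ∧ (∀ i, i ≠ istar → that i < mlo istar) ∧
      IsProbabilityMeasure P ∧
      (∀ᵐ s ∂P, InT tlo thi s) ∧
      IndepCoords P ∧
      (∀ i, ∀ᵐ s ∂P, s i ∈ ({t i, that i} : Set ℝ)) ∧
      (∫ s, s istar ∂P) = μstar ∧
      (∀ i, ∫ s, s i ∂P ∈ Set.Icc (mlo i) (mhi i)) ∧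
      0 < P {t} := by
  classical
  set m := Function.update mlo istar μstar
  have hm (i : ι) : m i ∈ Set.Icc (mlo i) (mhi i) := by
    rcases eq_or_ne i istar with rfl | hi
    · simpa [m] using hμ
    · simpa [m, hi] using h2 i
  have hcoord (i : ι) : ∃ b ∈ Set.Icc (tlo i) (thi i), (i ≠ istar → b < mlo istar) ∧
      ∃ p : unitInterval, 0 < p ∧ ∫ z, z ∂Ber(t i, b, p) = m i := by
    have hlo : tlo i < m i := (h1 i).trans_le (hm i).1
    have hhi : m i < thi i := (hm i).2.trans_lt (h3 i)
    rcases eq_or_ne i istar with rfl | hi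
    · obtain ⟨b, hb, -, hp⟩ :=
        exists_bernoulliMeasure_integral_eq_of_lt hlo hhi (lt_add_one _)
      exact ⟨b, hb, fun h => absurd rfl h, hp⟩
    · have hu : m i < mlo istar := by simpa [m, hi] using hstar i hi
      obtain ⟨b, hb, hbu, hp⟩ := exists_bernoulliMeasure_integral_eq_of_lt hlo hhi hu
      exact ⟨b, hb, fun _ => hbu, hp⟩
  choose that hthat hlt p hp hmean using hcoord
  set ν := fun i => Ber(t i, that i, p i)
  have hmeans (i : ι) : ∫ s, s i ∂Measure.pi ν = m i :=
    (integral_comp_eval (μ := ν) (f := fun z : ℝ => z) aestronglyMeasurable_id).trans (hmean i)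
  have hsupp (i : ι) : ∀ᵐ s ∂Measure.pi ν, s i ∈ ({t i, that i} : Set ℝ) :=
    Measure.tendsto_eval_ae_ae.eventually ae_mem_bernoulliMeasure
  refine ⟨that, Measure.pi ν, hthat, hlt, inferInstance, ?_,
    iIndepFun_pi (X := fun _ => id) fun _ => aemeasurable_id, hsupp,
    by simp [hmeans, m], fun i => hmeans i ▸ hm i, ?_⟩
  · refine ae_all_iff.2 fun i => (hsupp i).mono fun s hs => ?_
    rcases hs with h | h
    · exact h ▸ ht i
    · exact (Set.mem_singleton_iff.1 h) ▸ hthat i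
  · rw [Measure.pi_singleton]
    exact CanonicallyOrderedAdd.prod_pos.2 fun i _ => bernoulliMeasure_singleton_pos (hp i)

/-- Suppose `argmax_i μ̲_i = {i*}`. For any type profile `t ∈ 𝒯` and
any target mean `μ_{i*} ∈ [μ̲_{i*}, μ̄_{i*}]`, there exist a scenario `t̂ ∈ 𝒯` with
`max_{i ≠ i*} t̂_i < μ̲_{i*}` and a probability distribution `P` on `𝒯` with independent
coordinates such that each coordinate is supported on `{t_i, t̂_i}`, the mean of
coordinate `i*` equals `μ_{i*}`, all coordinate means lie in `[μ̲_i, μ̄_i]`, and `P`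
places positive probability on `{t}`. -/
theorem stmt_18 {ι : Type*} [Fintype ι] [Nonempty ι]
    (tlo thi mlo mhi : ι → ℝ)
    (h1 : ∀ i, tlo i < mlo i) (h2 : ∀ i, mlo i ≤ mhi i) (h3 : ∀ i, mhi i < thi i)
    (istar : ι) (hstar : ∀ i, i ≠ istar → mlo i < mlo istar)
    (t : ι → ℝ) (ht : InT tlo thi t)
    (μstar : ℝ) (hμ : μstar ∈ Set.Icc (mlo istar) (mhi istar)) :
    ∃ (that : ι → ℝ) (P : Measure (ι → ℝ)),
      InT tlo thi that ∧ (∀ i, i ≠ istar → that i < mlo istar) ∧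
      IsProbabilityMeasure P ∧
      (∀ᵐ s ∂P, InT tlo thi s) ∧
      IndepCoords P ∧
      (∀ i, ∀ᵐ s ∂P, s i ∈ ({t i, that i} : Set ℝ)) ∧
      (∫ s, s istar ∂P) = μstar ∧
      (∀ i, ∫ s, s i ∂P ∈ Set.Icc (mlo i) (mhi i)) ∧
      0 < P {t} :=
  stmt_18_general tlo thi mlo mhi h1 h2 h3 istar hstar t ht μstar hμ
end
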